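/- arXiv:1502.00696 — 5 statements merged into one kernel-verified Lean document; each statement's English description precedes it below -/
import Mathlib

section
/- Let α ∈ (0,1). There exists a constant c = c(α) > 0 such that for every p ∈ (1, 1/α), with q defined by 1/q = 1/p − α, there exists a nonzero f ∈ L^p(0,∞) with ‖I^α[f]‖_{L^q(0,∞)} ≥ c · [(p − 1)(1 − α p)]^{−(1 − α)} · ‖f‖_{L^p(0,∞)}. Consequently the operator norm K_{I,α}(p) := sup_{0 ≠ f ∈ L^p(0,∞)} ‖I^α[f]‖_q / ‖f‖_p satisfies K_{I,α}(p) ≥ c · [(p−1)(1−αp)]^{−(1−α)}. -/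
open MeasureTheory Real Set

/-- The Riemann–Liouville fractional integral
`I^α[φ](x) = (1/Γ(α)) ∫_0^x φ(t) (x-t)^{α-1} dt`. -/
noncomputable def fracInt (α : ℝ) (φ : ℝ → ℝ) (x : ℝ) : ℝ :=
  (1 / Real.Gamma α) * ∫ t in (0 : ℝ)..x, φ t * (x - t) ^ (α - 1)

/-!
Write `γ = p - 1` and `β = 1 - α p`, so that `1/q = β/p` and `γ + β = p (1 - α)`; in particular
the larger of `γ`, `β` is at least `(1 - α)/2`.

If `γ ≤ β`, test on the indicator of `(1 - δ, 1)` with `δ = 2^{-β/γ}`. For `x > 1 + δ` the kernel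
gives `I^α f(x) ≳ δ (x - 1)^{α - 1}`, and the choice of `δ` makes `∫_δ^1 s^{(α-1)q} ds = β/γ`
exactly, so `‖I^α f‖_q / ‖f‖_p ≳ (β/γ)^{β/p}`.
If `β ≤ γ`, test on `(1 - t)^{-(1-α)/γ}` over `(0, 1 - δ)` with `δ = 2^{-γ/β}`: now `‖f‖_p^p = γ/β`
and `I^α f ≳ γ/β` on `(1, 1 + δ)`, so the ratio is `≳ (γ/β)^{γ/p}`.

In both cases, with `{y, z} = {β, γ}` and `y ≥ (1 - α)/2`,
`(y/z)^{y/p} (yz)^{1-α} = y^{y/p + 1 - α} z^{z/p} ≥ ((1 - α)/2)^2 e^{-1}`, because `z^z ≥ e^{-1}`.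
-/

local notation "μ₊" => volume.restrict (Ioi (0 : ℝ))

lemma exp_neg_one_le_rpow_mul_self {x s : ℝ} (hx : 0 < x) (hs₀ : 0 ≤ s) (hs₁ : s ≤ 1) :
    exp (-1) ≤ x ^ (s * x) := by
  rw [rpow_def_of_pos hx, exp_le_exp]
  have hlog : x - 1 ≤ x * log x := by
    have := one_sub_inv_le_log_of_pos hx
    rw [sub_le_iff_le_add, ← sub_le_iff_le_add'] at this
    nlinarith [mul_le_mul_of_nonneg_left this hx.le, mul_inv_cancel₀ hx.ne']
  nlinarith

lemma sq_le_rpow_of_le {m y e : ℝ} (hm₀ : 0 < m) (hm₁ : m ≤ 1) (hmy : m ≤ y)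
    (he₀ : 0 ≤ e) (he₂ : e ≤ 2) : m ^ 2 ≤ y ^ e := by
  rcases le_total y 1 with hy | hy
  · calc m ^ 2 ≤ y ^ (2 : ℝ) := by rw [rpow_two]; gcongr
      _ ≤ y ^ e := rpow_le_rpow_of_exponent_ge (hm₀.trans_le hmy) hy he₂
  · calc m ^ 2 ≤ 1 := pow_le_one₀ hm₀.le hm₁
      _ ≤ y ^ e := one_le_rpow hy he₀

lemma sq_mul_exp_neg_one_mul_rpow_le_div_rpow {m y z p θ : ℝ} (hm₀ : 0 < m) (hm₁ : m ≤ 1)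
    (hmy : m ≤ y) (hz : 0 < z) (hp : 1 ≤ p) (hyp : y ≤ p) (hθ : θ ≤ 1)
    (hsum : y + z = p * θ) :
    m ^ 2 * exp (-1) * (y * z) ^ (-θ) ≤ (y / z) ^ (y / p) := by
  have hy : 0 < y := hm₀.trans_le hmy
  have hp₀ : 0 < p := by linarith
  have hθ₀ : 0 < θ := pos_of_mul_pos_right (hsum ▸ add_pos hy hz) hp₀.le
  have hz' : z / p + -θ = -(y / p) := by field_simp; linarith
  have hsplit : (y / z) ^ (y / p) = y ^ (y / p + θ) * z ^ (z / p) * (y * z) ^ (-θ) := by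
    calc (y / z) ^ (y / p) = y ^ (y / p + θ + -θ) * z ^ (z / p + -θ) := by
          rw [hz', add_neg_cancel_right, div_rpow hy.le hz.le, rpow_neg hz.le, div_eq_mul_inv]
      _ = _ := by rw [rpow_add hy, rpow_add hz, mul_rpow hy.le hz.le]; ring
  rw [hsplit]
  gcongr
  · exact sq_le_rpow_of_le hm₀ hm₁ hmy (by positivity)
      (by linarith [(div_le_one hp₀).2 hyp])
  · rw [div_eq_inv_mul]
    exact exp_neg_one_le_rpow_mul_self hz (by positivity) (inv_le_one_of_one_le₀ hp)

lemma half_le_two_rpow_neg {x : ℝ} (hx : x ≤ 1) : 1 / 2 ≤ (2 : ℝ) ^ (-x) := by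
  calc (1 : ℝ) / 2 = 2 ^ (-1 : ℝ) := by norm_num
    _ ≤ 2 ^ (-x) := rpow_le_rpow_of_exponent_le one_le_two (by linarith)

lemma rpow_div_two_le_rpow_of_le_two_mul {y z e : ℝ} (hy : 0 < y) (hyz : y ≤ 2 * z) (he₀ : e ≤ 0)
    (he₁ : -1 ≤ e) : z ^ e / 2 ≤ y ^ e := by
  have hz : 0 ≤ z := by linarith
  calc z ^ e / 2 ≤ 2 ^ e * z ^ e := by
        rw [div_eq_mul_inv, mul_comm]
        gcongr
        simpa using half_le_two_rpow_neg (x := -e) (by linarith)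
    _ = (2 * z) ^ e := (mul_rpow zero_le_two hz).symm
    _ ≤ y ^ e := rpow_le_rpow_of_nonpos hy hyz he₀

lemma integral_rpow_two_rpow_neg {κ : ℝ} (hκ : 0 < κ) :
    ∫ s in (2 : ℝ) ^ (-κ)..1, s ^ (-κ⁻¹ - 1) = κ := by
  have hδ : 0 < (2 : ℝ) ^ (-κ) := by positivity
  have hne : -κ⁻¹ - 1 ≠ -1 := by simp [hκ.ne']
  rw [integral_rpow (Or.inr ⟨hne, notMem_uIcc_of_lt hδ one_pos⟩), sub_add_cancel, one_rpow,
    ← rpow_mul zero_le_two, show -κ * -κ⁻¹ = 1 by field_simp, rpow_one]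
  field_simp
  ring

lemma setIntegral_Ioo_eq_intervalIntegral {f : ℝ → ℝ} {a b : ℝ} (hab : a ≤ b) :
    ∫ x in Ioo a b, f x = ∫ x in a..b, f x := by
  rw [intervalIntegral.integral_of_le hab, integral_Ioc_eq_integral_Ioo]

lemma eLpNorm_restrict_eq_ofReal_setIntegral {X : Type*} [MeasurableSpace X] {μ : Measure X}
    {s : Set X} {g : X → ℝ} {P : ℝ} (hs : MeasurableSet s) (hP : 0 < P)
    (hg : ∀ x ∈ s, 0 ≤ g x) (hint : IntegrableOn (fun x => g x ^ P) s μ) :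
    eLpNorm g (ENNReal.ofReal P) (μ.restrict s) =
      ENNReal.ofReal ((∫ x in s, g x ^ P ∂μ) ^ (1 / P)) := by
  rw [eLpNorm_eq_lintegral_rpow_enorm_toReal (by simpa using hP) ENNReal.ofReal_ne_top,
    ENNReal.toReal_ofReal hP.le, ← ENNReal.ofReal_rpow_of_nonneg
      (setIntegral_nonneg hs fun x hx => rpow_nonneg (hg x hx) P) (by positivity),
    ofReal_integral_eq_lintegral_ofReal hint
      ((ae_restrict_iff' hs).2 (ae_of_all _ fun x hx => rpow_nonneg (hg x hx) P))]
  congr 1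
  refine setLIntegral_congr_fun hs fun x hx => ?_
  rw [← ofReal_norm, norm_of_nonneg (hg x hx), ENNReal.ofReal_rpow_of_nonneg (hg x hx) hP.le]

lemma eLpNorm_indicator_restrict_of_subset {X E : Type*} [MeasurableSpace X]
    [NormedAddCommGroup E] {μ : Measure X} {s t : Set X} {g : X → E} {p : ENNReal}
    (hs : MeasurableSet s) (hst : s ⊆ t) :
    eLpNorm (s.indicator g) p (μ.restrict t) = eLpNorm g p (μ.restrict s) := by
  rw [eLpNorm_indicator_eq_eLpNorm_restrict hs, Measure.restrict_restrict_of_subset hst]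

lemma ofReal_setIntegral_rpow_le_eLpNorm {X : Type*} [MeasurableSpace X] {μ : Measure X}
    {s t : Set X} {G F : X → ℝ} {P : ℝ} (hs : MeasurableSet s) (hst : s ⊆ t) (hP : 0 < P)
    (hG : ∀ x ∈ s, 0 ≤ G x ∧ G x ≤ F x) (hint : IntegrableOn (fun x => G x ^ P) s μ) :
    ENNReal.ofReal ((∫ x in s, G x ^ P ∂μ) ^ (1 / P)) ≤
      eLpNorm F (ENNReal.ofReal P) (μ.restrict t) := by
  rw [← eLpNorm_restrict_eq_ofReal_setIntegral hs hP (fun x hx => (hG x hx).1) hint]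
  refine (eLpNorm_mono_ae ((ae_restrict_iff' hs).2 (ae_of_all _ fun x hx => ?_))).trans
    (eLpNorm_mono_measure _ (Measure.restrict_mono hst le_rfl))
  rw [norm_of_nonneg (hG x hx).1]
  exact (hG x hx).2.trans (le_abs_self _)

lemma fracInt_indicator_Ioo {α a b x : ℝ} {g : ℝ → ℝ} (ha : 0 ≤ a) (hab : a ≤ b)
    (hbx : b ≤ x) :
    fracInt α ((Ioo a b).indicator g) x =
      1 / Gamma α * ∫ t in Ioo a b, g t * (x - t) ^ (α - 1) := by
  have hsub : Ioo a b ⊆ Ioc 0 x := fun t ht => ⟨ha.trans_lt ht.1, (ht.2.trans_le hbx).le⟩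
  have hmul : ∀ t, (Ioo a b).indicator g t * (x - t) ^ (α - 1) =
      (Ioo a b).indicator (fun t => g t * (x - t) ^ (α - 1)) t := fun t =>
    (indicator_mul_left (Ioo a b) g fun t => (x - t) ^ (α - 1)).symm
  rw [fracInt, intervalIntegral.integral_of_le (ha.trans (hab.trans hbx))]
  simp_rw [hmul]
  rw [setIntegral_indicator measurableSet_Ioo, inter_eq_self_of_subset_right hsub]

lemma le_fracInt_indicator_Ioo_one {α a b x : ℝ} (hα₀ : 0 < α) (hα₁ : α ≤ 1) (ha : 0 ≤ a)
    (hab : a < b) (hx : b - a ≤ x - b) :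
    (b - a) * (x - b) ^ (α - 1) / (2 * Gamma α) ≤
      fracInt α ((Ioo a b).indicator fun _ => 1) x := by
  rw [fracInt_indicator_Ioo ha hab.le (by linarith)]
  calc (b - a) * (x - b) ^ (α - 1) / (2 * Gamma α)
      = 1 / Gamma α * ∫ _ in Ioo a b, (x - b) ^ (α - 1) / 2 := by
        rw [setIntegral_const, volume_real_Ioo_of_le hab.le, smul_eq_mul]
        field_simp
    _ ≤ 1 / Gamma α * ∫ t in Ioo a b, 1 * (x - t) ^ (α - 1) := by
        gcongr with t ht
        · exact integrableOn_const measure_Ioo_lt_top.ne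
        · refine (continuousOn_of_forall_continuousAt fun t ht => ?_).integrableOn_Icc.mono_set
            Ioo_subset_Icc_self
          fun_prop (disch := left; linarith [ht.2])
        · exact measurableSet_Ioo.nullMeasurableSet
        · rw [one_mul]
          exact rpow_div_two_le_rpow_of_le_two_mul (by linarith [ht.2]) (by linarith [ht.1])
            (by linarith) (by linarith)

lemma le_fracInt_indicator_Ioo_one_sub_rpow {α r δ x : ℝ} (hα₀ : 0 < α) (hα₁ : α ≤ 1) (hδ : 0 < δ)
    (hδ₁ : δ ≤ 1) (hx₁ : 1 ≤ x) (hx₂ : x ≤ 1 + δ) :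
    (∫ s in δ..1, s ^ (r + (α - 1))) / (2 * Gamma α) ≤
      fracInt α ((Ioo 0 (1 - δ)).indicator fun t => (1 - t) ^ r) x := by
  rw [fracInt_indicator_Ioo le_rfl (by linarith) (by linarith)]
  have hint : ∫ s in δ..1, s ^ (r + (α - 1)) = ∫ t in Ioo 0 (1 - δ), (1 - t) ^ (r + (α - 1)) := by
    rw [setIntegral_Ioo_eq_intervalIntegral (f := fun t => (1 - t) ^ (r + (α - 1))) (by linarith),
      intervalIntegral.integral_comp_sub_left (fun s => s ^ (r + (α - 1))), sub_sub_cancel,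
      sub_zero]
  calc (∫ s in δ..1, s ^ (r + (α - 1))) / (2 * Gamma α)
      = 1 / Gamma α * ∫ t in Ioo 0 (1 - δ), (1 - t) ^ (r + (α - 1)) / 2 := by
        rw [hint, integral_div]
        field_simp
    _ ≤ 1 / Gamma α * ∫ t in Ioo 0 (1 - δ), (1 - t) ^ r * (x - t) ^ (α - 1) := by
        gcongr with t ht
        · refine (continuousOn_of_forall_continuousAt fun t ht => ?_).integrableOn_Icc.mono_set
            Ioo_subset_Icc_self
          fun_prop (disch := left; linarith [ht.2])
        · refine (continuousOn_of_forall_continuousAt fun t ht => ?_).integrableOn_Icc.mono_set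
            Ioo_subset_Icc_self
          fun_prop (disch := left; linarith [ht.2])
        · exact measurableSet_Ioo.nullMeasurableSet
        · have h1t : 0 < 1 - t := by linarith [ht.2]
          rw [rpow_add h1t, mul_div_assoc]
          gcongr
          exact rpow_div_two_le_rpow_of_le_two_mul (by linarith) (by linarith [ht.2]) (by linarith)
            (by linarith)

lemma eLpNorm_indicator_Ioo_one {a b P : ℝ} (ha : 0 ≤ a) (hab : a ≤ b) (hP : 0 < P) :
    eLpNorm ((Ioo a b).indicator fun _ => (1 : ℝ)) (ENNReal.ofReal P) μ₊ =
      ENNReal.ofReal ((b - a) ^ (1 / P)) := by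
  rw [eLpNorm_indicator_restrict_of_subset measurableSet_Ioo
      (Ioo_subset_Ioi_self.trans (Ioi_subset_Ioi ha)),
    eLpNorm_restrict_eq_ofReal_setIntegral measurableSet_Ioo hP (fun _ _ => zero_le_one)
      (integrableOn_const measure_Ioo_lt_top.ne)]
  simp [volume_real_Ioo_of_le hab]

lemma eLpNorm_indicator_Ioo_one_sub_rpow {δ r P : ℝ} (hδ : 0 < δ) (hδ₁ : δ ≤ 1) (hP : 0 < P) :
    eLpNorm ((Ioo 0 (1 - δ)).indicator fun t => (1 - t) ^ r) (ENNReal.ofReal P) μ₊ =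
      ENNReal.ofReal ((∫ s in δ..1, s ^ (r * P)) ^ (1 / P)) := by
  have hint : IntegrableOn (fun t => ((1 - t) ^ r) ^ P) (Ioo 0 (1 - δ)) := by
    refine (continuousOn_of_forall_continuousAt fun t ht => ?_).integrableOn_Icc.mono_set
      Ioo_subset_Icc_self
    fun_prop (disch := first | exact Or.inr hP.le | (left; linarith [ht.2]))
  rw [eLpNorm_indicator_restrict_of_subset measurableSet_Ioo Ioo_subset_Ioi_self,
    eLpNorm_restrict_eq_ofReal_setIntegral measurableSet_Ioo hP
      (fun t ht => rpow_nonneg (by linarith [ht.2]) _) hint,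
    setIntegral_congr_fun measurableSet_Ioo fun t ht => (rpow_mul (by linarith [ht.2]) r P).symm,
    setIntegral_Ioo_eq_intervalIntegral (f := fun t => (1 - t) ^ (r * P)) (by linarith),
    intervalIntegral.integral_comp_sub_left (fun s => s ^ (r * P)), sub_sub_cancel, sub_zero]

lemma ofReal_le_eLpNorm_fracInt_indicator_Ioo_one {α κ Q : ℝ} (hα₀ : 0 < α) (hα₁ : α < 1)
    (hκ : 0 < κ) (hQ : (α - 1) * Q = -κ⁻¹ - 1) :
    ENNReal.ofReal ((2 : ℝ) ^ (-κ) / (2 * Gamma α) * κ ^ (1 / Q)) ≤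
      eLpNorm (fracInt α ((Ioo (1 - (2 : ℝ) ^ (-κ)) 1).indicator fun _ => 1))
        (ENNReal.ofReal Q) μ₊ := by
  have hQ₀ : 0 < Q := by nlinarith [inv_pos.2 hκ]
  have hΓ : 0 < Gamma α := Gamma_pos_of_pos hα₀
  set δ := (2 : ℝ) ^ (-κ)
  have hδ : 0 < δ := by positivity
  set C := δ / (2 * Gamma α)
  have hG : ∫ x in Ioo (1 + δ) 2, (C * (x - 1) ^ (α - 1)) ^ Q = C ^ Q * κ := by
    rw [setIntegral_congr_fun measurableSet_Ioo fun x hx => by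
        rw [mul_rpow (by positivity) (rpow_nonneg (by linarith [hx.1]) _),
          ← rpow_mul (by linarith [hx.1]), hQ],
      integral_const_mul, setIntegral_Ioo_eq_intervalIntegral (f := fun x => (x - 1) ^ _)
        (by linarith [rpow_le_one_of_one_le_of_nonpos one_le_two (neg_nonpos.2 hκ.le)]),
      intervalIntegral.integral_comp_sub_right (fun s => s ^ _), add_sub_cancel_left,
      show (2 : ℝ) - 1 = 1 by norm_num, integral_rpow_two_rpow_neg hκ]
  have hpt : ∀ x ∈ Ioo (1 + δ) 2,
      0 ≤ C * (x - 1) ^ (α - 1) ∧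
        C * (x - 1) ^ (α - 1) ≤ fracInt α ((Ioo (1 - δ) 1).indicator fun _ => 1) x := fun x hx => by
    refine ⟨mul_nonneg (by positivity) (rpow_nonneg (by linarith [hx.1]) _), ?_⟩
    have := le_fracInt_indicator_Ioo_one hα₀ hα₁.le (a := 1 - δ) (b := 1) (x := x)
      (by linarith [rpow_le_one_of_one_le_of_nonpos one_le_two (neg_nonpos.2 hκ.le)])
      (by linarith) (by linarith [hx.1])
    rwa [sub_sub_cancel, mul_div_right_comm] at this
  have hint : IntegrableOn (fun x => (C * (x - 1) ^ (α - 1)) ^ Q) (Ioo (1 + δ) 2) := by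
    refine (continuousOn_of_forall_continuousAt fun x hx => ?_).integrableOn_Icc.mono_set
      Ioo_subset_Icc_self
    fun_prop (disch := first | exact Or.inr hQ₀.le | (left; linarith [hx.1]))
  refine le_of_eq_of_le ?_ (ofReal_setIntegral_rpow_le_eLpNorm measurableSet_Ioo
    (Ioo_subset_Ioi_self.trans (Ioi_subset_Ioi (by linarith : (0 : ℝ) ≤ 1 + δ))) hQ₀ hpt hint)
  rw [hG, mul_rpow (by positivity) hκ.le, ← rpow_mul (by positivity),
    mul_one_div_cancel hQ₀.ne', rpow_one]

lemma ofReal_le_eLpNorm_fracInt_indicator_Ioo_one_sub_rpow {α κ r Q : ℝ} (hα₀ : 0 < α)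
    (hα₁ : α < 1) (hκ : 0 < κ) (hr : r + (α - 1) = -κ⁻¹ - 1) (hQ : 0 < Q) :
    ENNReal.ofReal (κ / (2 * Gamma α) * 2 ^ (-(κ / Q))) ≤
      eLpNorm (fracInt α ((Ioo 0 (1 - (2 : ℝ) ^ (-κ))).indicator fun t => (1 - t) ^ r))
        (ENNReal.ofReal Q) μ₊ := by
  have hΓ : 0 < Gamma α := Gamma_pos_of_pos hα₀
  set δ := (2 : ℝ) ^ (-κ) with hδ_def
  have hδ : 0 < δ := by positivity
  have hδ₁ : δ ≤ 1 := rpow_le_one_of_one_le_of_nonpos one_le_two (neg_nonpos.2 hκ.le)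
  set W := κ / (2 * Gamma α)
  have hpt : ∀ x ∈ Ioo 1 (1 + δ),
      0 ≤ W ∧ W ≤ fracInt α ((Ioo 0 (1 - δ)).indicator fun t => (1 - t) ^ r) x := fun x hx => by
    refine ⟨by positivity, ?_⟩
    have := le_fracInt_indicator_Ioo_one_sub_rpow (r := r) hα₀ hα₁.le hδ hδ₁ hx.1.le hx.2.le
    rwa [hr, integral_rpow_two_rpow_neg hκ] at this
  refine le_of_eq_of_le ?_ (ofReal_setIntegral_rpow_le_eLpNorm measurableSet_Ioo
    (Ioo_subset_Ioi_self.trans (Ioi_subset_Ioi zero_le_one)) hQ hpt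
    (integrableOn_const measure_Ioo_lt_top.ne))
  rw [setIntegral_const, volume_real_Ioo_of_le (by linarith), add_sub_cancel_left, smul_eq_mul,
    mul_rpow hδ.le (by positivity), ← rpow_mul (x := W) (by positivity),
    mul_one_div_cancel hQ.ne', rpow_one, hδ_def, ← rpow_mul zero_le_two, mul_comm, neg_mul,
    mul_one_div]

noncomputable def fracIntLowerConst (α : ℝ) : ℝ :=
  ((1 - α) / 2) ^ 2 * exp (-1) / (4 * Gamma α)

lemma fracIntLowerConst_pos {α : ℝ} (hα₀ : 0 < α) (hα₁ : α < 1) : 0 < fracIntLowerConst α := by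
  have := Gamma_pos_of_pos hα₀
  have : 0 < 1 - α := by linarith
  unfold fracIntLowerConst
  positivity

theorem exists_le_eLpNorm_fracInt_of_sub_one_le {α p : ℝ} (hα₀ : 0 < α) (hα₁ : α < 1)
    (hp : 1 < p) (hαp : α * p < 1) (hpα : p - 1 ≤ 1 - α * p) :
    ∃ f : ℝ → ℝ, MemLp f (ENNReal.ofReal p) μ₊ ∧ eLpNorm f (ENNReal.ofReal p) μ₊ ≠ 0 ∧
      ENNReal.ofReal (fracIntLowerConst α * ((p - 1) * (1 - α * p)) ^ (-(1 - α))) *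
          eLpNorm f (ENNReal.ofReal p) μ₊ ≤
        eLpNorm (fracInt α f) (ENNReal.ofReal (p / (1 - α * p))) μ₊ := by
  set γ := p - 1 with hγ_def
  set β := 1 - α * p with hβ_def
  have hγ : 0 < γ := by linarith
  have hβ : 0 < β := by linarith
  have hp₀ : 0 < p := by linarith
  have hβp : β ≤ p := by linarith [mul_pos hα₀ hp₀]
  have hΓ : 0 < Gamma α := Gamma_pos_of_pos hα₀
  set δ := (2 : ℝ) ^ (-(β / γ)) with hδ_def
  have hδ : 0 < δ := by positivity
  have hδ₁ : δ < 1 := rpow_lt_one_of_one_lt_of_neg one_lt_two (by simp; positivity)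
  have hf : eLpNorm ((Ioo (1 - δ) 1).indicator fun _ => (1 : ℝ)) (ENNReal.ofReal p) μ₊ =
      ENNReal.ofReal (δ ^ (1 / p)) := by
    rw [eLpNorm_indicator_Ioo_one (by linarith) (by linarith) hp₀, sub_sub_cancel]
  have hIf := ofReal_le_eLpNorm_fracInt_indicator_Ioo_one hα₀ hα₁ (κ := β / γ) (Q := p / β)
    (by positivity) (by field_simp; simp only [hγ_def, hβ_def]; ring)
  have hδp : δ ^ (1 / p) ≤ 2 * δ := by
    have hsplit : δ = δ ^ (1 / p) * 2 ^ (-(β / p)) := by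
      rw [hδ_def, ← rpow_mul zero_le_two, ← rpow_add two_pos]
      congr 1
      field_simp
      simp only [hγ_def]
      ring
    have := half_le_two_rpow_neg ((div_le_one hp₀).2 hβp)
    nlinarith [rpow_nonneg hδ.le (1 / p)]
  have hkey := sq_mul_exp_neg_one_mul_rpow_le_div_rpow (by linarith : 0 < (1 - α) / 2)
    (by linarith) (by nlinarith : (1 - α) / 2 ≤ β) hγ hp.le hβp
    (by linarith : 1 - α ≤ 1) (by simp only [hβ_def, hγ_def]; ring : β + γ = p * (1 - α))
  refine ⟨_, ⟨(measurable_const.indicator measurableSet_Ioo).aestronglyMeasurable,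
    hf ▸ ENNReal.ofReal_lt_top⟩, by rw [hf, ne_eq, ENNReal.ofReal_eq_zero, not_le]; positivity, ?_⟩
  have hc := fracIntLowerConst_pos hα₀ hα₁
  rw [hf, ← ENNReal.ofReal_mul (by positivity)]
  refine (ENNReal.ofReal_le_ofReal ?_).trans (one_div_div p β ▸ hIf)
  calc fracIntLowerConst α * (γ * β) ^ (-(1 - α)) * δ ^ (1 / p)
      ≤ fracIntLowerConst α * (γ * β) ^ (-(1 - α)) * (2 * δ) := by gcongr
    _ = ((1 - α) / 2) ^ 2 * exp (-1) * (β * γ) ^ (-(1 - α)) * (δ / (2 * Gamma α)) := by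
        rw [fracIntLowerConst, mul_comm γ β]
        field_simp
        ring
    _ ≤ (β / γ) ^ (β / p) * (δ / (2 * Gamma α)) := by gcongr
    _ = _ := mul_comm _ _

theorem exists_le_eLpNorm_fracInt_of_le_sub_one {α p : ℝ} (hα₀ : 0 < α) (hα₁ : α < 1)
    (hp : 1 < p) (hαp : α * p < 1) (hpα : 1 - α * p ≤ p - 1) :
    ∃ f : ℝ → ℝ, MemLp f (ENNReal.ofReal p) μ₊ ∧ eLpNorm f (ENNReal.ofReal p) μ₊ ≠ 0 ∧
      ENNReal.ofReal (fracIntLowerConst α * ((p - 1) * (1 - α * p)) ^ (-(1 - α))) *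
          eLpNorm f (ENNReal.ofReal p) μ₊ ≤
        eLpNorm (fracInt α f) (ENNReal.ofReal (p / (1 - α * p))) μ₊ := by
  set γ := p - 1 with hγ_def
  set β := 1 - α * p with hβ_def
  have hγ : 0 < γ := by linarith
  have hβ : 0 < β := by linarith
  have hp₀ : 0 < p := by linarith
  have hΓ : 0 < Gamma α := Gamma_pos_of_pos hα₀
  set δ := (2 : ℝ) ^ (-(γ / β)) with hδ_def
  have hδ : 0 < δ := by positivity
  have hδ₁ : δ < 1 := rpow_lt_one_of_one_lt_of_neg one_lt_two (by simp; positivity)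
  set r := -(1 - α) / γ with hr_def
  have hrp : r * p = -(γ / β)⁻¹ - 1 := by
    rw [hr_def]
    field_simp
    simp only [hγ_def, hβ_def]
    ring
  have hf : eLpNorm ((Ioo 0 (1 - δ)).indicator fun t => (1 - t) ^ r) (ENNReal.ofReal p) μ₊ =
      ENNReal.ofReal ((γ / β) ^ (1 / p)) := by
    rw [eLpNorm_indicator_Ioo_one_sub_rpow hδ hδ₁.le hp₀, hrp,
      integral_rpow_two_rpow_neg (by positivity)]
  have hIf := ofReal_le_eLpNorm_fracInt_indicator_Ioo_one_sub_rpow hα₀ hα₁ (κ := γ / β) (r := r)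
    (Q := p / β) (by positivity) (by rw [← hrp, hr_def]; field_simp; simp only [hγ_def]; ring)
    (by positivity)
  have hkey := sq_mul_exp_neg_one_mul_rpow_le_div_rpow (by linarith : 0 < (1 - α) / 2)
    (by linarith) (by nlinarith : (1 - α) / 2 ≤ γ) hβ hp.le (by linarith : γ ≤ p)
    (by linarith : 1 - α ≤ 1) (by simp only [hβ_def, hγ_def]; ring : γ + β = p * (1 - α))
  have hsplit : γ / β = (γ / β) ^ (γ / p) * (γ / β) ^ (1 / p) := by
    rw [← rpow_add (by positivity), show γ / p + 1 / p = 1 by field_simp; simp only [hγ_def]; ring,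
      rpow_one]
  have h2 := half_le_two_rpow_neg ((div_le_one hp₀).2 (by linarith : γ ≤ p))
  refine ⟨_, ⟨(Measurable.indicator (by fun_prop) measurableSet_Ioo).aestronglyMeasurable,
    hf ▸ ENNReal.ofReal_lt_top⟩, by rw [hf, ne_eq, ENNReal.ofReal_eq_zero, not_le]; positivity, ?_⟩
  have hc := fracIntLowerConst_pos hα₀ hα₁
  rw [hf, ← ENNReal.ofReal_mul (by positivity)]
  refine (ENNReal.ofReal_le_ofReal ?_).trans (div_div_div_cancel_right₀ hβ.ne' γ p ▸ hIf)
  calc fracIntLowerConst α * (γ * β) ^ (-(1 - α)) * (γ / β) ^ (1 / p)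
      = ((1 - α) / 2) ^ 2 * exp (-1) * (γ * β) ^ (-(1 - α)) * (γ / β) ^ (1 / p) /
          (4 * Gamma α) := by
        rw [fracIntLowerConst]
        ring
    _ ≤ (γ / β) ^ (γ / p) * (γ / β) ^ (1 / p) / (4 * Gamma α) := by gcongr
    _ = γ / β / (2 * Gamma α) * (1 / 2) := by
        rw [← hsplit]
        field_simp
        ring
    _ ≤ γ / β / (2 * Gamma α) * 2 ^ (-(γ / p)) := by gcongr

/-- Lower bound for the operator norm of the Riemann–Liouville fractional integral
`I^α : L^p(0,∞) → L^q(0,∞)`: for some `c = c(α) > 0` and any admissible `p`, there is a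
nonzero `f ∈ L^p(0,∞)` with `‖I^α[f]‖_q ≥ c · [(p-1)(1-αp)]^{-(1-α)} · ‖f‖_p`. -/
theorem stmt_1 (α : ℝ) (hα : α ∈ Set.Ioo (0 : ℝ) 1) :
    ∃ c : ℝ, 0 < c ∧
      ∀ p q : ℝ, p ∈ Set.Ioo (1 : ℝ) (1 / α) → 1 / q = 1 / p - α →
        ∃ f : ℝ → ℝ,
          MemLp f (ENNReal.ofReal p) (volume.restrict (Set.Ioi (0 : ℝ))) ∧
          eLpNorm f (ENNReal.ofReal p) (volume.restrict (Set.Ioi (0 : ℝ))) ≠ 0 ∧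
          ENNReal.ofReal (c * ((p - 1) * (1 - α * p)) ^ (-(1 - α))) *
              eLpNorm f (ENNReal.ofReal p) (volume.restrict (Set.Ioi (0 : ℝ))) ≤
            eLpNorm (fracInt α f) (ENNReal.ofReal q) (volume.restrict (Set.Ioi (0 : ℝ))) := by
  obtain ⟨hα₀, hα₁⟩ := hα
  refine ⟨fracIntLowerConst α, fracIntLowerConst_pos hα₀ hα₁, fun p q ⟨hp, hpα⟩ hq => ?_⟩
  have hαp : α * p < 1 := by rwa [lt_div_iff₀ hα₀, mul_comm] at hpα
  obtain rfl : q = p / (1 - α * p) := by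
    rw [← one_div_one_div q, hq]
    field_simp
  rcases le_total (p - 1) (1 - α * p) with h | h
  · exact exists_le_eLpNorm_fracInt_of_sub_one_le hα₀ hα₁ hp hαp h
  · exact exists_le_eLpNorm_fracInt_of_le_sub_one hα₀ hα₁ hp hαp h
end

section
/- Let α ∈ (0,1), 0 < h₁ < h₂, Δ = h₂ − h₁, and 1 ≤ p < 1/α. Define φ(x) = 1_{(h₁,∞)}(x) · (x − h₁)^{−α} − 1_{(h₂,∞)}(x) · (x − h₂)^{−α} for x > 0 (this is Γ(1−α) times the Riemann–Liouville fractional derivative of order α of the indicator 1_{(h₁,h₂)}). Then Δ^{1/p − α} · (1 − α p)^{−1/p} ≤ ‖φ‖_{L^p(0,∞)} ≤ 3 · Δ^{1/p − α} · (1 − α p)^{−1/p}. -/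
open MeasureTheory Real Set ENNReal

/-- `Γ(1-α)` times the Riemann–Liouville fractional derivative of the indicator
`1_{(h₁,h₂)}`: `φ(x) = 1_{(h₁,∞)}(x)(x-h₁)^{-α} - 1_{(h₂,∞)}(x)(x-h₂)^{-α}`. -/
noncomputable def fracDerivIndicator (α h₁ h₂ : ℝ) (x : ℝ) : ℝ :=
  Set.indicator (Set.Ioi h₁) (fun y => (y - h₁) ^ (-α)) x -
    Set.indicator (Set.Ioi h₂) (fun y => (y - h₂) ^ (-α)) x

/-!
Write `Δ = h₂ - h₁` and `A = Δ^{1-αp}/(1-αp) = ∫_0^Δ t^{-αp} dt`. On `(h₁, h₂]` we have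
`|φ|^p = (x - h₁)^{-αp}`, which integrates to `A`: this is the lower bound. For the upper bound
split `(h₂, ∞)` at `h₂ + Δ`. Near `h₂` the bound `|φ(x)| ≤ (x - h₂)^{-α}` contributes at most `A`
again; further out the two singular terms nearly cancel, and the tangent-line inequality for the
convex function `t ↦ t^{-α}` gives `|φ(x)| ≤ αΔ (x - h₂)^{-α-1}`, whose `p`-th power integrates to
`α^p A (1-αp)/((1+α)p-1) ≤ A`. So `A ≤ ∫|φ|^p ≤ 3A`, and `3^{1/p} ≤ 3` finishes.
-/

theorem Real.one_sub_mul_le_one_add_rpow_neg {s α : ℝ} (hs : 0 ≤ s) (hα₀ : 0 ≤ α) (hα₁ : α ≤ 1) :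
    1 - α * s ≤ (1 + s) ^ (-α) := by
  have bernoulli : (1 + s) ^ α ≤ 1 + α * s :=
    rpow_one_add_le_one_add_mul_self (by linarith) hα₀ hα₁
  rw [rpow_neg (by linarith)]
  calc 1 - α * s ≤ (1 + α * s)⁻¹ := by
        rw [← one_div, le_div_iff₀ (by positivity)]
        nlinarith [mul_nonneg hα₀ hs]
    _ ≤ ((1 + s) ^ α)⁻¹ := inv_anti₀ (by positivity) bernoulli

theorem Real.rpow_neg_sub_rpow_neg_le {a b α : ℝ} (ha : 0 < a) (hab : a ≤ b) (hα₀ : 0 ≤ α)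
    (hα₁ : α ≤ 1) : a ^ (-α) - b ^ (-α) ≤ α * (b - a) * a ^ (-α - 1) := by
  have hs : 0 ≤ (b - a) / a := div_nonneg (sub_nonneg.2 hab) ha.le
  have hb : b ^ (-α) = a ^ (-α) * (1 + (b - a) / a) ^ (-α) := by
    rw [← mul_rpow ha.le (by positivity)]
    congr 1
    field_simp
    ring
  have := mul_le_mul_of_nonneg_left (one_sub_mul_le_one_add_rpow_neg hs hα₀ hα₁)
    (rpow_nonneg ha.le (-α))
  rw [hb, rpow_sub ha, rpow_one]
  calc a ^ (-α) - a ^ (-α) * (1 + (b - a) / a) ^ (-α)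
      ≤ a ^ (-α) - a ^ (-α) * (1 - α * ((b - a) / a)) := by linarith
    _ = α * (b - a) * (a ^ (-α) / a) := by ring

theorem lintegral_Ioc_sub_rpow {r : ℝ} (hr : -1 < r) (a : ℝ) {c : ℝ} (hc : 0 ≤ c) :
    ∫⁻ x in Ioc a (a + c), ENNReal.ofReal ((x - a) ^ r) =
      ENNReal.ofReal (c ^ (r + 1) / (r + 1)) := by
  rw [show Ioc a (a + c) = (· - a) ⁻¹' Ioc 0 c by simp [preimage_sub_const_Ioc, add_comm],
    (measurePreserving_sub_right volume a).setLIntegral_comp_preimage measurableSet_Ioc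
      (f := fun t ↦ ENNReal.ofReal (t ^ r)) (by fun_prop), ← ofReal_integral_eq_lintegral_ofReal,
    ← intervalIntegral.integral_of_le hc,
    integral_rpow (Or.inl hr), zero_rpow (by linarith), sub_zero]
  · exact (intervalIntegrable_iff_integrableOn_Ioc_of_le hc).1
      (intervalIntegral.intervalIntegrable_rpow' hr)
  · filter_upwards [ae_restrict_mem measurableSet_Ioc] with x hx
    exact rpow_nonneg hx.1.le r

theorem lintegral_Ioi_sub_rpow {r : ℝ} (hr : r < -1) (a : ℝ) {c : ℝ} (hc : 0 < c) :
    ∫⁻ x in Ioi (a + c), ENNReal.ofReal ((x - a) ^ r) =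
      ENNReal.ofReal (-c ^ (r + 1) / (r + 1)) := by
  rw [show Ioi (a + c) = (· - a) ⁻¹' Ioi c by simp [preimage_sub_const_Ioi, add_comm],
    (measurePreserving_sub_right volume a).setLIntegral_comp_preimage measurableSet_Ioi
      (f := fun t ↦ ENNReal.ofReal (t ^ r)) (by fun_prop),
    ← ofReal_integral_eq_lintegral_ofReal (integrableOn_Ioi_rpow_of_lt hr hc),
    integral_Ioi_rpow_of_lt hr hc]
  filter_upwards [ae_restrict_mem measurableSet_Ioi] with x hx
  exact rpow_nonneg (hc.trans hx).le r

theorem eLpNorm_ofReal_eq_lintegral {X : Type*} [MeasurableSpace X] {μ : Measure X} {p : ℝ}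
    (hp : 0 < p) (f : X → ℝ) :
    eLpNorm f (ENNReal.ofReal p) μ = (∫⁻ x, ENNReal.ofReal (|f x| ^ p) ∂μ) ^ (1 / p) := by
  rw [eLpNorm_eq_lintegral_rpow_enorm_toReal (by simpa using hp) ofReal_ne_top,
    toReal_ofReal hp.le]
  simp_rw [Real.enorm_eq_ofReal_abs, ofReal_rpow_of_nonneg (abs_nonneg _) hp.le]

section fracDerivIndicator

variable {α h₁ h₂ p x : ℝ}

theorem fracDerivIndicator_of_le (hx : x ≤ h₁) (h : h₁ ≤ h₂) :
    fracDerivIndicator α h₁ h₂ x = 0 := by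
  simp [fracDerivIndicator, not_lt.2 hx, not_lt.2 (hx.trans h)]

theorem fracDerivIndicator_of_mem_Ioc (hx : x ∈ Ioc h₁ h₂) :
    fracDerivIndicator α h₁ h₂ x = (x - h₁) ^ (-α) := by
  simp [fracDerivIndicator, hx.1, not_lt.2 hx.2]

theorem abs_fracDerivIndicator_of_lt (hα : 0 ≤ α) (h : h₁ ≤ h₂) (hx : h₂ < x) :
    |fracDerivIndicator α h₁ h₂ x| = (x - h₂) ^ (-α) - (x - h₁) ^ (-α) := by
  have hmono : (x - h₁) ^ (-α) ≤ (x - h₂) ^ (-α) :=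
    rpow_le_rpow_of_nonpos (by linarith) (by linarith) (by linarith)
  simp only [fracDerivIndicator, indicator_of_mem (mem_Ioi.2 (h.trans_lt hx)),
    indicator_of_mem (mem_Ioi.2 hx)]
  rw [abs_of_nonpos (by linarith), neg_sub]

theorem abs_fracDerivIndicator_le_rpow (hα : 0 ≤ α) (h : h₁ ≤ h₂) (hx : h₂ < x) :
    |fracDerivIndicator α h₁ h₂ x| ≤ (x - h₂) ^ (-α) := by
  rw [abs_fracDerivIndicator_of_lt hα h hx]
  linarith [rpow_nonneg (by linarith : 0 ≤ x - h₁) (-α)]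

theorem abs_fracDerivIndicator_le_mul_rpow (hα₀ : 0 ≤ α) (hα₁ : α ≤ 1) (h : h₁ ≤ h₂)
    (hx : h₂ < x) : |fracDerivIndicator α h₁ h₂ x| ≤ α * (h₂ - h₁) * (x - h₂) ^ (-α - 1) := by
  rw [abs_fracDerivIndicator_of_lt hα₀ h hx]
  convert rpow_neg_sub_rpow_neg_le (sub_pos.2 hx) (by linarith : x - h₂ ≤ x - h₁) hα₀ hα₁ using 2
  ring

theorem setLIntegral_Ioc_fracDerivIndicator (hαp : α * p < 1) (h : h₁ ≤ h₂) :
    ∫⁻ x in Ioc h₁ h₂, ENNReal.ofReal (|fracDerivIndicator α h₁ h₂ x| ^ p) =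
      ENNReal.ofReal ((h₂ - h₁) ^ (1 - α * p) / (1 - α * p)) := by
  calc ∫⁻ x in Ioc h₁ h₂, ENNReal.ofReal (|fracDerivIndicator α h₁ h₂ x| ^ p)
      = ∫⁻ x in Ioc h₁ (h₁ + (h₂ - h₁)), ENNReal.ofReal ((x - h₁) ^ (-(α * p))) := by
        rw [add_sub_cancel]
        refine setLIntegral_congr_fun measurableSet_Ioc fun x hx ↦ ?_
        have hx₀ : 0 ≤ x - h₁ := by linarith [hx.1]
        rw [fracDerivIndicator_of_mem_Ioc hx, abs_of_nonneg (rpow_nonneg hx₀ _),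
          ← rpow_mul hx₀, neg_mul]
    _ = _ := by
        rw [lintegral_Ioc_sub_rpow (by linarith) h₁ (sub_nonneg.2 h), neg_add_eq_sub]

theorem setLIntegral_Ioc_fracDerivIndicator_le (hα : 0 ≤ α) (hp : 0 ≤ p) (hαp : α * p < 1)
    (h : h₁ ≤ h₂) :
    ∫⁻ x in Ioc h₂ (h₂ + (h₂ - h₁)), ENNReal.ofReal (|fracDerivIndicator α h₁ h₂ x| ^ p) ≤
      ENNReal.ofReal ((h₂ - h₁) ^ (1 - α * p) / (1 - α * p)) := by
  calc ∫⁻ x in Ioc h₂ (h₂ + (h₂ - h₁)), ENNReal.ofReal (|fracDerivIndicator α h₁ h₂ x| ^ p)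
      ≤ ∫⁻ x in Ioc h₂ (h₂ + (h₂ - h₁)), ENNReal.ofReal ((x - h₂) ^ (-(α * p))) := by
        refine setLIntegral_mono (by fun_prop) fun x hx ↦ ENNReal.ofReal_le_ofReal ?_
        have hx₀ : 0 ≤ x - h₂ := by linarith [hx.1]
        rw [← neg_mul, rpow_mul hx₀]
        exact rpow_le_rpow (abs_nonneg _) (abs_fracDerivIndicator_le_rpow hα h hx.1) hp
    _ = _ := by
        rw [lintegral_Ioc_sub_rpow (by linarith) h₂ (sub_nonneg.2 h), neg_add_eq_sub]

theorem setLIntegral_Ioi_fracDerivIndicator_le (hα₀ : 0 < α) (hα₁ : α ≤ 1) (hp : 1 ≤ p)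
    (hαp : α * p < 1) (h : h₁ < h₂) :
    ∫⁻ x in Ioi (h₂ + (h₂ - h₁)), ENNReal.ofReal (|fracDerivIndicator α h₁ h₂ x| ^ p) ≤
      ENNReal.ofReal ((h₂ - h₁) ^ (1 - α * p) / (1 - α * p)) := by
  set Δ := h₂ - h₁
  set r := (-α - 1) * p with hr_def
  have hr : r < -1 := by nlinarith
  have hΔ : 0 < Δ := sub_pos.2 h
  have hconst : (α * Δ) ^ p * (-Δ ^ (r + 1) / (r + 1)) ≤ Δ ^ (1 - α * p) / (1 - α * p) := by
    have hmerge : Δ ^ p * Δ ^ (r + 1) = Δ ^ (1 - α * p) := by rw [← rpow_add hΔ, hr_def]; ring_nf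
    have hαp_le : α ^ p * (1 - α * p) ≤ (α + 1) * p - 1 := by
      nlinarith [rpow_le_self_of_le_one hα₀.le hα₁ hp]
    calc (α * Δ) ^ p * (-Δ ^ (r + 1) / (r + 1))
        = α ^ p * Δ ^ (1 - α * p) / ((α + 1) * p - 1) := by
          rw [mul_rpow hα₀.le hΔ.le, ← hmerge, show (α + 1) * p - 1 = -(r + 1) by ring,
            div_neg, neg_div]
          ring
      _ ≤ Δ ^ (1 - α * p) / (1 - α * p) := by
          rw [div_le_div_iff₀ (by nlinarith) (by linarith)]
          nlinarith [mul_le_mul_of_nonneg_left hαp_le (rpow_nonneg hΔ.le (1 - α * p))]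
  calc ∫⁻ x in Ioi (h₂ + Δ), ENNReal.ofReal (|fracDerivIndicator α h₁ h₂ x| ^ p)
      ≤ ∫⁻ x in Ioi (h₂ + Δ), ENNReal.ofReal ((α * Δ) ^ p) * ENNReal.ofReal ((x - h₂) ^ r) := by
        refine setLIntegral_mono (by fun_prop) fun x hx ↦ ?_
        have hx₀ : 0 < x - h₂ := by linarith [mem_Ioi.1 hx]
        rw [← ENNReal.ofReal_mul (by positivity), hr_def, rpow_mul hx₀.le,
          ← mul_rpow (by positivity) (by positivity)]
        exact ofReal_le_ofReal (rpow_le_rpow (abs_nonneg _)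
          (abs_fracDerivIndicator_le_mul_rpow hα₀.le hα₁ h.le (by linarith)) (by linarith))
    _ = ENNReal.ofReal ((α * Δ) ^ p) * ENNReal.ofReal (-Δ ^ (r + 1) / (r + 1)) := by
        rw [lintegral_const_mul _ (by fun_prop), lintegral_Ioi_sub_rpow hr h₂ hΔ]
    _ ≤ _ := by
        rw [← ENNReal.ofReal_mul (by positivity)]
        exact ofReal_le_ofReal hconst

theorem lintegral_fracDerivIndicator_le (hα₀ : 0 < α) (hα₁ : α ≤ 1) (hp : 1 ≤ p)
    (hαp : α * p < 1) (h : h₁ < h₂) :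
    ∫⁻ x, ENNReal.ofReal (|fracDerivIndicator α h₁ h₂ x| ^ p) ≤
      3 * ENNReal.ofReal ((h₂ - h₁) ^ (1 - α * p) / (1 - α * p)) := by
  set F := fun x ↦ ENNReal.ofReal (|fracDerivIndicator α h₁ h₂ x| ^ p)
  set c := h₂ + (h₂ - h₁)
  set A := ENNReal.ofReal ((h₂ - h₁) ^ (1 - α * p) / (1 - α * p))
  have hcover : (univ : Set ℝ) = ((Iic h₁ ∪ Ioc h₁ h₂) ∪ Ioc h₂ c) ∪ Ioi c := by
    rw [Iic_union_Ioc_eq_Iic h.le, Iic_union_Ioc_eq_Iic (by linarith), Iic_union_Ioi]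
  have hvanish : ∫⁻ x in Iic h₁, F x = 0 := by
    refine (setLIntegral_congr_fun measurableSet_Iic fun x hx ↦ ?_).trans lintegral_zero
    simp [F, fracDerivIndicator_of_le hx h.le, zero_rpow (by linarith : p ≠ 0)]
  calc ∫⁻ x, F x = ∫⁻ x in ((Iic h₁ ∪ Ioc h₁ h₂) ∪ Ioc h₂ c) ∪ Ioi c, F x := by
        rw [← hcover, setLIntegral_univ]
    _ ≤ ((∫⁻ x in Iic h₁, F x) + ∫⁻ x in Ioc h₁ h₂, F x) + (∫⁻ x in Ioc h₂ c, F x) +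
          ∫⁻ x in Ioi c, F x := by
        refine (lintegral_union_le _ _ _).trans ?_
        gcongr
        refine (lintegral_union_le _ _ _).trans ?_
        gcongr
        exact lintegral_union_le _ _ _
    _ ≤ 0 + A + A + A := by
        rw [hvanish, setLIntegral_Ioc_fracDerivIndicator hαp h.le]
        gcongr
        · exact setLIntegral_Ioc_fracDerivIndicator_le hα₀.le (by linarith) hαp h.le
        · exact setLIntegral_Ioi_fracDerivIndicator_le hα₀ hα₁ hp hαp h
    _ = 3 * A := by ring

end fracDerivIndicator

/-- Two-sided `L^p(0,∞)` estimate for the fractional derivative of the indicator of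
`(h₁,h₂)`: with `Δ = h₂ - h₁`,
`Δ^{1/p-α} (1-αp)^{-1/p} ≤ ‖φ‖_p ≤ 3 Δ^{1/p-α} (1-αp)^{-1/p}` for `1 ≤ p < 1/α`. -/
theorem stmt_8 (α h₁ h₂ p : ℝ) (hα : α ∈ Set.Ioo (0 : ℝ) 1) (h1 : 0 < h₁)
    (h12 : h₁ < h₂) (hp : 1 ≤ p) (hp2 : p < 1 / α) :
    ENNReal.ofReal ((h₂ - h₁) ^ (1 / p - α) * (1 - α * p) ^ (-(1 / p))) ≤
        eLpNorm (fracDerivIndicator α h₁ h₂) (ENNReal.ofReal p)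
          (volume.restrict (Set.Ioi (0 : ℝ))) ∧
      eLpNorm (fracDerivIndicator α h₁ h₂) (ENNReal.ofReal p)
          (volume.restrict (Set.Ioi (0 : ℝ))) ≤
        ENNReal.ofReal (3 * (h₂ - h₁) ^ (1 / p - α) * (1 - α * p) ^ (-(1 / p))) := by
  obtain ⟨hα₀, hα₁⟩ := hα
  have hp₀ : 0 < p := by linarith
  have hαp : α * p < 1 := by rwa [lt_div_iff₀ hα₀, mul_comm] at hp2
  set A := (h₂ - h₁) ^ (1 - α * p) / (1 - α * p)
  have hroot : ENNReal.ofReal A ^ (1 / p) =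
      ENNReal.ofReal ((h₂ - h₁) ^ (1 / p - α) * (1 - α * p) ^ (-(1 / p))) := by
    have hΔ : 0 ≤ h₂ - h₁ := by linarith
    rw [ofReal_rpow_of_nonneg (div_nonneg (rpow_nonneg hΔ _) (by linarith)) (by positivity),
      div_rpow (rpow_nonneg hΔ _) (by linarith), ← rpow_mul hΔ, rpow_neg (by linarith),
      div_eq_mul_inv, show (1 - α * p) * (1 / p) = 1 / p - α by field_simp]
  rw [eLpNorm_ofReal_eq_lintegral hp₀]
  constructor
  · rw [← hroot, ← setLIntegral_Ioc_fracDerivIndicator hαp h12.le]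
    gcongr
    exact fun x hx ↦ h1.trans hx.1
  · calc (∫⁻ x in Ioi 0, ENNReal.ofReal (|fracDerivIndicator α h₁ h₂ x| ^ p)) ^ (1 / p)
        ≤ (3 * ENNReal.ofReal A) ^ (1 / p) := by
          gcongr
          exact setLIntegral_le_lintegral _ _ |>.trans
            (lintegral_fracDerivIndicator_le hα₀ hα₁.le hp hαp h12)
      _ = 3 ^ (1 / p) * ENNReal.ofReal A ^ (1 / p) := mul_rpow_of_nonneg _ _ (by positivity)
      _ ≤ 3 * ENNReal.ofReal A ^ (1 / p) := by
          gcongr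
          simpa using ENNReal.rpow_le_rpow_of_exponent_le (x := 3) (by norm_num)
            ((div_le_one hp₀).2 hp)
      _ = _ := by rw [hroot, mul_assoc, ENNReal.ofReal_mul (p := 3) (by norm_num), ofReal_ofNat]
end

section
/- Let α ∈ (0,1), h > 0, n ≥ 1, let a₁, …, a_n > 0 be such that the intervals A_k = (a_k, a_k + h) are pairwise disjoint, and let c₁, …, c_n be real numbers. Set f(x) = Σ_{k=1}^n c_k 1_{A_k}(x) and let Φ(x) = Σ_{k=1}^n c_k [ 1_{(a_k,∞)}(x)(x − a_k)^{−α} − 1_{(a_k + h,∞)}(x)(x − a_k − h)^{−α} ], so that Φ = Γ(1−α) · D^α[f]. Then for every p with 1 ≤ p < 1/α one has ‖Φ‖_{L^p(0,∞)} ≤ 3 · h^{1/p − α} · (1 − α p)^{−1/p} · Σ_{k=1}^n |c_k| = 3 · h^{1/p − α − 1} · (1 − α p)^{−1/p} · ‖f‖_{L^1(0,∞)}. -/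
/-!
Every term of `Φ` is a translate of the bump `g(x) = x₊^{-α} - (x - h)₊^{-α}`, so by Minkowski's
inequality and translation invariance it suffices to show `∫ |g|^p ≤ 3 h^{1-αp} / (1 - αp)`, and
then to use `3^{1/p} ≤ 3`. On `(0, h]` and on `(h, 2h]` the bump is dominated by the singular
powers `x^{-α}` and `(x - h)^{-α}`, each contributing `h^{1-αp} / (1 - αp)`. Beyond `2h`,
Bernoulli's inequality gives `|g(x)| ≤ α h (x - h)^{-α-1}`, whose `p`-th power integrates to
`α^p h^{1-αp} / ((α + 1)p - 1) ≤ h^{1-αp} / (1 - αp)`. The identity with `‖f‖₁` holds because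
the intervals are disjoint, so `‖f‖₁ = h Σ |c_k|`.
-/

open MeasureTheory Real Set ENNReal

section Lp

variable {X ι : Type*}

theorem enorm_sum_mul_indicator_one [Fintype ι] {s : ι → Set X}
    (hs : Pairwise fun i j => Disjoint (s i) (s j)) (c : ι → ℝ) (x : X) :
    ‖∑ k, c k * (s k).indicator (fun _ => (1 : ℝ)) x‖ₑ =
      ∑ k, (s k).indicator (fun _ => ‖c k‖ₑ) x := by
  by_cases hx : ∃ k, x ∈ s k
  · obtain ⟨k, hk⟩ := hx
    have hnot : ∀ j ≠ k, x ∉ s j := fun j hj hj' => disjoint_left.mp (hs hj) hj' hk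
    rw [Fintype.sum_eq_single k fun j hj => by simp [hnot j hj],
      Fintype.sum_eq_single k fun j hj => by simp [hnot j hj]]
    simp [hk]
  · push Not at hx
    simp [hx]

variable [MeasurableSpace X] {μ : Measure X}

theorem eLpNorm_one_sum_mul_indicator_one [Fintype ι] {s : ι → Set X}
    (hsm : ∀ k, MeasurableSet (s k)) (hs : Pairwise fun i j => Disjoint (s i) (s j)) (c : ι → ℝ) :
    eLpNorm (fun x => ∑ k, c k * (s k).indicator (fun _ => (1 : ℝ)) x) 1 μ =
      ∑ k, ‖c k‖ₑ * μ (s k) := by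
  simp_rw [eLpNorm_one_eq_lintegral_enorm, enorm_sum_mul_indicator_one hs]
  rw [lintegral_finsetSum _ fun k _ => measurable_const.indicator (hsm k)]
  simp_rw [lintegral_indicator_const (hsm _)]

theorem eLpNorm_sum_mul_le {p : ℝ≥0∞} (hp : 1 ≤ p) (s : Finset ι) {g : ι → X → ℝ}
    (hg : ∀ k ∈ s, AEStronglyMeasurable (g k) μ) (c : ι → ℝ) {M : ℝ}
    (hM : ∀ k ∈ s, eLpNorm (g k) p μ ≤ ENNReal.ofReal M) :
    eLpNorm (fun x => ∑ k ∈ s, c k * g k x) p μ ≤ ENNReal.ofReal ((∑ k ∈ s, |c k|) * M) := by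
  have hsum : (fun x => ∑ k ∈ s, c k * g k x) = ∑ k ∈ s, c k • g k := by
    funext x; simp [Finset.sum_apply]
  calc eLpNorm (fun x => ∑ k ∈ s, c k * g k x) p μ
      ≤ ∑ k ∈ s, eLpNorm (c k • g k) p μ := by
        rw [hsum]; exact eLpNorm_sum_le (fun k hk => (hg k hk).const_smul _) hp
    _ ≤ ∑ k ∈ s, ENNReal.ofReal |c k| * ENNReal.ofReal M := by
        gcongr with k hk
        rw [eLpNorm_const_smul, ← Real.enorm_eq_ofReal_abs]
        exact mul_le_mul_right (hM k hk) _
    _ = ENNReal.ofReal ((∑ k ∈ s, |c k|) * M) := by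
        rw [← Finset.sum_mul, ENNReal.ofReal_mul (Finset.sum_nonneg fun k _ => abs_nonneg _),
          ENNReal.ofReal_sum_of_nonneg fun k _ => abs_nonneg _]

end Lp

theorem lintegral_Ioc_zero_ofReal_rpow {r h : ℝ} (hr : -1 < r) (hh : 0 ≤ h) :
    ∫⁻ x in Ioc 0 h, ENNReal.ofReal (x ^ r) = ENNReal.ofReal (h ^ (r + 1) / (r + 1)) := by
  have hint : IntegrableOn (fun x : ℝ => x ^ r) (Ioc 0 h) :=
    (intervalIntegrable_iff_integrableOn_Ioc_of_le hh).mp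
      (intervalIntegral.intervalIntegrable_rpow' hr)
  rw [← ofReal_integral_eq_lintegral_ofReal hint
    (ae_restrict_of_forall_mem measurableSet_Ioc fun x hx => rpow_nonneg hx.1.le r),
    ← intervalIntegral.integral_of_le hh, integral_rpow (Or.inl hr),
    zero_rpow (by linarith), sub_zero]

theorem lintegral_Ioi_ofReal_rpow {s h : ℝ} (hs : s < -1) (hh : 0 < h) :
    ∫⁻ x in Ioi h, ENNReal.ofReal (x ^ s) = ENNReal.ofReal (h ^ (s + 1) / -(s + 1)) := by
  rw [← ofReal_integral_eq_lintegral_ofReal (integrableOn_Ioi_rpow_of_lt hs hh)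
    (ae_restrict_of_forall_mem measurableSet_Ioi fun x hx => rpow_nonneg (hh.trans hx).le s),
    integral_Ioi_rpow_of_lt hs hh, div_neg, neg_div]

theorem rpow_neg_sub_rpow_neg_add_le {α t h : ℝ} (ht : 0 < t) (hh : 0 ≤ h) (hα0 : 0 ≤ α)
    (hα1 : α ≤ 1) : t ^ (-α) - (t + h) ^ (-α) ≤ α * h * t ^ (-α - 1) := by
  set u := h / t
  have hu : 0 ≤ u := div_nonneg hh ht.le
  have htu : t * u = h := mul_div_cancel₀ h ht.ne'
  have hbernoulli : (1 + u) ^ α ≤ 1 + α * u :=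
    rpow_one_add_le_one_add_mul_self (by linarith) hα0 hα1
  -- `(1 - α u) (1 + u)^α ≤ (1 - α u) (1 + α u) ≤ 1` whenever `1 - α u ≥ 0`
  have hlower : 1 - α * u ≤ (1 + u) ^ (-α) := by
    rcases le_or_gt (1 - α * u) 0 with hneg | hpos
    · exact hneg.trans (rpow_nonneg (by linarith) _)
    · rw [Real.rpow_neg (by linarith), ← one_div, le_div_iff₀ (rpow_pos_of_pos (by linarith) α)]
      nlinarith [mul_nonneg (mul_nonneg hα0 hu) (mul_nonneg hα0 hu)]
  have hsplit : (t + h) ^ (-α) = t ^ (-α) * (1 + u) ^ (-α) := by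
    rw [← mul_rpow ht.le (by linarith), mul_add, htu, mul_one]
  have hpow : α * h * t ^ (-α - 1) = t ^ (-α) * (α * u) := by
    rw [sub_eq_add_neg, rpow_add ht, Real.rpow_neg_one, ← htu]
    field_simp
  rw [hsplit, hpow]
  nlinarith [mul_le_mul_of_nonneg_left hlower (rpow_nonneg ht.le (-α))]

theorem enorm_rpow_le_ofReal_rpow {p y b : ℝ} (hy : |y| ≤ b) (hp : 0 ≤ p) :
    ‖y‖ₑ ^ p ≤ ENNReal.ofReal (b ^ p) := by
  rw [Real.enorm_eq_ofReal_abs, ENNReal.ofReal_rpow_of_nonneg (abs_nonneg y) hp]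
  exact ENNReal.ofReal_le_ofReal (rpow_le_rpow (abs_nonneg y) hy hp)

noncomputable section FracBump

/-- `Γ(1-α) D^α 1_{(0,h)}`. -/
def fracBump (α h x : ℝ) : ℝ :=
  (Ioi 0).indicator (fun y => y ^ (-α)) x - (Ioi h).indicator (fun y => (y - h) ^ (-α)) x

theorem fracBump_sub (α h a x : ℝ) :
    (Ioi a).indicator (fun y => (y - a) ^ (-α)) x -
        (Ioi (a + h)).indicator (fun y => (y - (a + h)) ^ (-α)) x =
      fracBump α h (x - a) := by
  simp only [fracBump, indicator_apply, mem_Ioi, lt_sub_iff_add_lt', add_zero, sub_sub]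

theorem measurable_fracBump (α h : ℝ) : Measurable (fracBump α h) :=
  ((measurable_id.pow_const _).indicator measurableSet_Ioi).sub
    (((measurable_id.sub_const h).pow_const _).indicator measurableSet_Ioi)

def fracBumpNear (α p h : ℝ) : ℝ → ℝ≥0∞ :=
  (Ioc 0 h).indicator fun t => ENNReal.ofReal (t ^ (-(α * p)))

def fracBumpTail (α p h : ℝ) : ℝ → ℝ≥0∞ :=
  (Ioi h).indicator fun t => ENNReal.ofReal ((α * h) ^ p * t ^ (-((α + 1) * p)))

variable {α h p : ℝ}

@[fun_prop]
theorem measurable_fracBumpNear : Measurable (fracBumpNear α p h) :=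
  Measurable.indicator (by fun_prop) measurableSet_Ioc

@[fun_prop]
theorem measurable_fracBumpTail : Measurable (fracBumpTail α p h) :=
  Measurable.indicator (by fun_prop) measurableSet_Ioi

theorem enorm_fracBump_rpow_le (hα0 : 0 ≤ α) (hα1 : α ≤ 1) (hh : 0 ≤ h) (hp : 0 < p) (x : ℝ) :
    ‖fracBump α h x‖ₑ ^ p ≤
      fracBumpNear α p h x + fracBumpNear α p h (x - h) + fracBumpTail α p h (x - h) := by
  rcases le_or_gt x 0 with hx0 | hx0
  · have : fracBump α h x = 0 := by
      simp [fracBump, indicator_of_notMem, hx0, hx0.trans hh]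
    simp [this, ENNReal.zero_rpow_of_pos hp]
  rcases le_or_gt x h with hxh | hxh
  · have hbump : fracBump α h x = x ^ (-α) := by simp [fracBump, hx0, hxh]
    calc ‖fracBump α h x‖ₑ ^ p ≤ ENNReal.ofReal ((x ^ (-α)) ^ p) :=
          enorm_rpow_le_ofReal_rpow (by rw [hbump, abs_of_nonneg (rpow_nonneg hx0.le _)]) hp.le
      _ = fracBumpNear α p h x := by
          rw [fracBumpNear, indicator_of_mem (mem_Ioc.mpr ⟨hx0, hxh⟩), ← rpow_mul hx0.le, neg_mul]
      _ ≤ _ := le_add_right (le_add_right le_rfl)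
  set t := x - h with ht_def
  have ht : 0 < t := sub_pos.mpr hxh
  have hx : x = t + h := by rw [ht_def, sub_add_cancel]
  have hmono : x ^ (-α) ≤ t ^ (-α) := rpow_le_rpow_of_nonpos ht (by linarith) (by linarith)
  have habs : |fracBump α h x| = t ^ (-α) - x ^ (-α) := by
    rw [fracBump, indicator_of_mem (mem_Ioi.mpr hx0), indicator_of_mem (mem_Ioi.mpr hxh),
      abs_sub_comm, abs_of_nonneg (sub_nonneg.mpr hmono)]
  rcases le_or_gt t h with hth | hth
  · calc ‖fracBump α h x‖ₑ ^ p ≤ ENNReal.ofReal ((t ^ (-α)) ^ p) :=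
          enorm_rpow_le_ofReal_rpow (by rw [habs]; linarith [rpow_nonneg hx0.le (-α)]) hp.le
      _ = fracBumpNear α p h t := by
          rw [fracBumpNear, indicator_of_mem (mem_Ioc.mpr ⟨ht, hth⟩), ← rpow_mul ht.le, neg_mul]
      _ ≤ _ := le_add_right le_add_self
  · calc ‖fracBump α h x‖ₑ ^ p ≤ ENNReal.ofReal ((α * h * t ^ (-α - 1)) ^ p) :=
          enorm_rpow_le_ofReal_rpow
            (by rw [habs, hx]; exact rpow_neg_sub_rpow_neg_add_le ht hh hα0 hα1) hp.le
      _ = fracBumpTail α p h t := by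
          rw [fracBumpTail, indicator_of_mem (mem_Ioi.mpr hth),
            mul_rpow (by positivity) (rpow_nonneg ht.le _), ← rpow_mul ht.le]
          ring_nf
      _ ≤ _ := le_add_self

theorem lintegral_fracBumpNear (hh : 0 ≤ h) (hαp : α * p < 1) :
    ∫⁻ t, fracBumpNear α p h t = ENNReal.ofReal (h ^ (1 - α * p) / (1 - α * p)) := by
  rw [fracBumpNear, lintegral_indicator measurableSet_Ioc,
    lintegral_Ioc_zero_ofReal_rpow (by linarith) hh, neg_add_eq_sub]

theorem lintegral_fracBumpTail_le (hα0 : 0 < α) (hα1 : α ≤ 1) (hh : 0 < h) (hp : 1 ≤ p)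
    (hαp : α * p < 1) :
    ∫⁻ t, fracBumpTail α p h t ≤ ENNReal.ofReal (h ^ (1 - α * p) / (1 - α * p)) := by
  have hexp : -((α + 1) * p) < -1 := by nlinarith
  have hαpow : α ^ p ≤ α := by
    simpa using rpow_le_rpow_of_exponent_ge hα0 hα1 hp
  have hhpow : h ^ p * h ^ (-((α + 1) * p) + 1) = h ^ (1 - α * p) := by
    rw [← rpow_add hh]; ring_nf
  rw [fracBumpTail, lintegral_indicator measurableSet_Ioi]
  simp_rw [ENNReal.ofReal_mul (rpow_nonneg (mul_nonneg hα0.le hh.le) p)]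
  rw [lintegral_const_mul _ (by fun_prop), lintegral_Ioi_ofReal_rpow hexp hh,
    ← ENNReal.ofReal_mul (rpow_nonneg (mul_nonneg hα0.le hh.le) p)]
  refine ENNReal.ofReal_le_ofReal ?_
  have hcoef : α ^ p * (1 - α * p) ≤ (α + 1) * p - 1 := by
    nlinarith [mul_le_mul_of_nonneg_right hαpow (by linarith : (0 : ℝ) ≤ 1 - α * p)]
  rw [mul_rpow hα0.le hh.le, mul_assoc, mul_div_assoc', hhpow, ← mul_div_assoc,
    show -(-((α + 1) * p) + 1) = (α + 1) * p - 1 by ring,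
    div_le_div_iff₀ (by nlinarith) (by linarith)]
  nlinarith [mul_le_mul_of_nonneg_left hcoef (rpow_nonneg hh.le (1 - α * p))]

theorem lintegral_enorm_fracBump_rpow_le (hα0 : 0 < α) (hα1 : α ≤ 1) (hh : 0 < h)
    (hp : 1 ≤ p) (hαp : α * p < 1) :
    ∫⁻ x, ‖fracBump α h x‖ₑ ^ p ≤ ENNReal.ofReal (3 * (h ^ (1 - α * p) / (1 - α * p))) := by
  calc ∫⁻ x, ‖fracBump α h x‖ₑ ^ p
      ≤ ∫⁻ x, (fracBumpNear α p h x + fracBumpNear α p h (x - h) + fracBumpTail α p h (x - h)) :=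
        lintegral_mono (enorm_fracBump_rpow_le hα0.le hα1 hh.le (by linarith))
    _ = (∫⁻ x, fracBumpNear α p h x) + (∫⁻ x, fracBumpNear α p h x) +
          ∫⁻ x, fracBumpTail α p h x := by
        rw [lintegral_add_left (by fun_prop), lintegral_add_left (by fun_prop),
          lintegral_sub_right_eq_self, lintegral_sub_right_eq_self]
    _ ≤ _ := by
        grw [lintegral_fracBumpTail_le hα0 hα1 hh hp hαp, lintegral_fracBumpNear hh.le hαp]
        have hC : 0 ≤ h ^ (1 - α * p) / (1 - α * p) := div_nonneg (by positivity) (by linarith)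
        rw [← ENNReal.ofReal_add hC hC, ← ENNReal.ofReal_add (by positivity) hC]
        exact le_of_eq (by ring_nf)

theorem eLpNorm_fracBump_le (hα0 : 0 < α) (hα1 : α ≤ 1) (hh : 0 < h) (hp : 1 ≤ p)
    (hαp : α * p < 1) :
    eLpNorm (fracBump α h) (ENNReal.ofReal p) volume ≤
      ENNReal.ofReal (3 * h ^ (1 / p - α) * (1 - α * p) ^ (-(1 / p))) := by
  have hp0 : 0 < p := by linarith
  have hq : 0 < 1 - α * p := by linarith
  have hsplit : (3 * (h ^ (1 - α * p) / (1 - α * p))) ^ (1 / p) =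
      3 ^ (1 / p) * h ^ (1 / p - α) * (1 - α * p) ^ (-(1 / p)) := by
    rw [div_eq_mul_inv, mul_rpow (by norm_num) (by positivity),
      mul_rpow (by positivity) (by positivity), ← rpow_mul hh.le, ← Real.rpow_neg_one,
      ← rpow_mul hq.le, mul_assoc]
    congr 3 <;> field_simp
  have hthree : (3 : ℝ) ^ (1 / p) ≤ 3 := by
    simpa using rpow_le_rpow_of_exponent_le (by norm_num : (1 : ℝ) ≤ 3)
      ((div_le_one hp0).mpr hp)
  rw [eLpNorm_eq_lintegral_rpow_enorm_toReal (by simpa using hp0) ofReal_ne_top,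
    toReal_ofReal hp0.le]
  calc (∫⁻ x, ‖fracBump α h x‖ₑ ^ p) ^ (1 / p)
      ≤ ENNReal.ofReal (3 * (h ^ (1 - α * p) / (1 - α * p))) ^ (1 / p) := by
        gcongr
        exact lintegral_enorm_fracBump_rpow_le hα0 hα1 hh hp hαp
    _ = ENNReal.ofReal (3 ^ (1 / p) * h ^ (1 / p - α) * (1 - α * p) ^ (-(1 / p))) := by
        rw [ENNReal.ofReal_rpow_of_nonneg (by positivity) (by positivity), hsplit]
    _ ≤ _ := by gcongr

end FracBump

theorem stmt_10_general (α h : ℝ) (hα : α ∈ Set.Ioo (0 : ℝ) 1) (hh : 0 < h)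
    (n : ℕ) (a c : Fin n → ℝ) (ha : ∀ k, 0 < a k)
    (hdisj : Pairwise fun i j =>
      Disjoint (Set.Ioo (a i) (a i + h)) (Set.Ioo (a j) (a j + h)))
    (p : ℝ) (hp : 1 ≤ p) (hp2 : p < 1 / α) :
    let f : ℝ → ℝ := fun x =>
      ∑ k, c k * Set.indicator (Set.Ioo (a k) (a k + h)) (fun _ => (1 : ℝ)) x
    let Φ : ℝ → ℝ := fun x =>
      ∑ k, c k * (Set.indicator (Set.Ioi (a k)) (fun y => (y - a k) ^ (-α)) x -
        Set.indicator (Set.Ioi (a k + h)) (fun y => (y - (a k + h)) ^ (-α)) x)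
    eLpNorm Φ (ENNReal.ofReal p) (volume.restrict (Set.Ioi (0 : ℝ))) ≤
        ENNReal.ofReal
          (3 * h ^ (1 / p - α) * (1 - α * p) ^ (-(1 / p)) * ∑ k, |c k|) ∧
      ENNReal.ofReal (3 * h ^ (1 / p - α) * (1 - α * p) ^ (-(1 / p)) * ∑ k, |c k|) =
        ENNReal.ofReal (3 * h ^ (1 / p - α - 1) * (1 - α * p) ^ (-(1 / p))) *
          eLpNorm f 1 (volume.restrict (Set.Ioi (0 : ℝ))) := by
  obtain ⟨hα0, hα1⟩ := hα
  have hαp : α * p < 1 := by rw [mul_comm]; exact (lt_div_iff₀ hα0).mp hp2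
  intro f Φ
  have hΦ : Φ = fun x => ∑ k, c k * fracBump α h (x - a k) := by simp only [Φ, fracBump_sub]
  have hf : eLpNorm f 1 (volume.restrict (Ioi 0)) = ∑ k, ‖c k‖ₑ * ENNReal.ofReal h := by
    refine (eLpNorm_one_sum_mul_indicator_one (fun k => measurableSet_Ioo) hdisj c).trans ?_
    congr! 2 with k
    rw [Measure.restrict_apply measurableSet_Ioo,
      inter_eq_left.mpr (Ioo_subset_Ioi_self.trans (Ioi_subset_Ioi (ha k).le)),
      Real.volume_Ioo, add_sub_cancel_left]
  constructor
  · calc eLpNorm Φ (ENNReal.ofReal p) (volume.restrict (Ioi 0))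
        ≤ eLpNorm Φ (ENNReal.ofReal p) volume := eLpNorm_mono_measure _ Measure.restrict_le_self
      _ ≤ _ := by
        rw [hΦ, mul_comm]
        refine eLpNorm_sum_mul_le (by simpa using hp) _ (fun k _ =>
          ((measurable_fracBump α h).comp (measurable_sub_const _)).aestronglyMeasurable) c
          fun k _ => ?_
        rw [eLpNorm_comp_measurePreserving (measurable_fracBump α h).aestronglyMeasurable
          (measurePreserving_sub_right volume (a k))]
        exact eLpNorm_fracBump_le hα0 hα1.le hh hp hαp
  · have hpow : h ^ (1 / p - α) = h ^ (1 / p - α - 1) * h := by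
      rw [← rpow_add_one hh.ne', sub_add_cancel]
    simp_rw [hf, ← Finset.sum_mul, Real.enorm_eq_ofReal_abs]
    rw [← ENNReal.ofReal_sum_of_nonneg fun k _ => abs_nonneg _,
      ← ENNReal.ofReal_mul (Finset.sum_nonneg fun k _ => abs_nonneg _),
      ← ENNReal.ofReal_mul (by positivity), hpow]
    ring_nf

/-- `L^p` estimate for the fractional derivative of a very simple (stepwise) function
`f = Σ c_k 1_{(a_k, a_k+h)}` with pairwise disjoint intervals of common length `h`:
`‖Γ(1-α) D^α f‖_p ≤ 3 h^{1/p-α} (1-αp)^{-1/p} Σ|c_k|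
  = 3 h^{1/p-α-1} (1-αp)^{-1/p} ‖f‖_1` for `1 ≤ p < 1/α`. -/
theorem stmt_10 (α h : ℝ) (hα : α ∈ Set.Ioo (0 : ℝ) 1) (hh : 0 < h)
    (n : ℕ) (hn : 1 ≤ n) (a c : Fin n → ℝ) (ha : ∀ k, 0 < a k)
    (hdisj : Pairwise fun i j =>
      Disjoint (Set.Ioo (a i) (a i + h)) (Set.Ioo (a j) (a j + h)))
    (p : ℝ) (hp : 1 ≤ p) (hp2 : p < 1 / α) :
    let f : ℝ → ℝ := fun x =>
      ∑ k, c k * Set.indicator (Set.Ioo (a k) (a k + h)) (fun _ => (1 : ℝ)) x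
    let Φ : ℝ → ℝ := fun x =>
      ∑ k, c k * (Set.indicator (Set.Ioi (a k)) (fun y => (y - a k) ^ (-α)) x -
        Set.indicator (Set.Ioi (a k + h)) (fun y => (y - (a k + h)) ^ (-α)) x)
    eLpNorm Φ (ENNReal.ofReal p) (volume.restrict (Set.Ioi (0 : ℝ))) ≤
        ENNReal.ofReal
          (3 * h ^ (1 / p - α) * (1 - α * p) ^ (-(1 / p)) * ∑ k, |c k|) ∧
      ENNReal.ofReal (3 * h ^ (1 / p - α) * (1 - α * p) ^ (-(1 / p)) * ∑ k, |c k|) =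
        ENNReal.ofReal (3 * h ^ (1 / p - α - 1) * (1 - α * p) ^ (-(1 / p))) *
          eLpNorm f 1 (volume.restrict (Set.Ioi (0 : ℝ))) :=
  stmt_10_general α h hα hh n a c ha hdisj p hp hp2
end

section
/- Let α ∈ (0,1), h > 0, and let f(x) = Σ_{k=1}^n c_k 1_{A_k}(x) be a very simple function with step h (pairwise disjoint intervals A_k = (a_k, a_k + h)). Let ζ : (1, 1/α) → (0, ∞) be bounded away from zero, set ψ_α(p) = (1 − α p)^{−1/p} and θ(p) = ψ_α(p) · ζ(p), and let Φ = Γ(1−α) · D^α[f] be given explicitly by Φ(x) = Σ_{k=1}^n c_k [ 1_{(a_k,∞)}(x)(x − a_k)^{−α} − 1_{(a_k+h,∞)}(x)(x − a_k − h)^{−α} ]. Then sup_{p ∈ (1, 1/α)} [ ‖Φ‖_{L^p(0,∞)} / θ(p) ] ≤ 3 · h^{−α − 1} · ( sup_{p ∈ (1, 1/α)} [ h^{1/p} / ζ(p) ] ) · ‖f‖_{L^1(0,∞)}. -/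
/-!
Fix `p ∈ (1, 1/α)`. By Minkowski's inequality and translation invariance, `‖Φ‖_p` is at most
`∑ |c_k|` times the `L^p` norm of `Γ(1-α) D^α 1_{(0,h)} = x₊^{-α} - (x-h)₊^{-α}`. That function
is `x^{-α}` on `(0,h]` minus the translate by `h` of `D(y) = y₊^{-α} - (y+h)₊^{-α}`, and `D(y)` is
at most `y^{-α}` on `(0,h]` and, by the mean value theorem, at most `α h y^{-α-1}` beyond `h`.
Each of these three pieces has `L^p` norm at most
`(h^{1-αp}/(1-αp))^{1/p} = h^{1/p-α} (1-αp)^{-1/p}`, which gives the factor `3`. Disjointness of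
the intervals gives `‖f‖_1 ≥ h ∑ |c_k|`, and `h^{1/p}/ζ(p)` is bounded by its supremum.
-/

open MeasureTheory Real Set ENNReal Function

lemma eLpNorm_comp_sub_const {E : Type*} [NormedAddCommGroup E] (g : ℝ → E) (d : ℝ)
    (p : ℝ≥0∞) : eLpNorm (fun x => g (x - d)) p volume = eLpNorm g p volume := by
  have h := (measurableEmbedding_subRight d).eLpNorm_map_measure (g := g) (p := p) (μ := volume)
  rw [map_sub_right_eq_self] at h
  exact h.symm

lemma eLpNorm_sum_smul_comp_sub_le {ι E : Type*} [NormedAddCommGroup E] [NormedSpace ℝ E]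
    (s : Finset ι) (c a : ι → ℝ) {g : ℝ → E} (hg : AEStronglyMeasurable g volume)
    {p : ℝ≥0∞} (hp : 1 ≤ p) :
    eLpNorm (fun x => ∑ i ∈ s, c i • g (x - a i)) p volume ≤
      (∑ i ∈ s, ‖c i‖ₑ) * eLpNorm g p volume := by
  have hmeas : ∀ i, AEStronglyMeasurable (fun x => g (x - a i)) volume := fun i =>
    hg.comp_measurePreserving (measurePreserving_sub_right volume (a i))
  calc eLpNorm (fun x => ∑ i ∈ s, c i • g (x - a i)) p volume
      = eLpNorm (∑ i ∈ s, c i • fun x => g (x - a i)) p volume := by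
        congr 1; ext x; simp [Finset.sum_apply]
    _ ≤ ∑ i ∈ s, eLpNorm (c i • fun x => g (x - a i)) p volume :=
        eLpNorm_sum_le (fun i _ => (hmeas i).const_smul (c i)) hp
    _ = (∑ i ∈ s, ‖c i‖ₑ) * eLpNorm g p volume := by
        simp_rw [eLpNorm_const_smul, eLpNorm_comp_sub_const, Finset.sum_mul]

lemma sum_enorm_mul_measure_le_eLpNorm_one {α ι : Type*} [MeasurableSpace α] [Fintype ι]
    {μ : Measure α} {s : ι → Set α} {t : Set α} (hs : ∀ i, MeasurableSet (s i))
    (hst : ∀ i, s i ⊆ t) (hdisj : Pairwise (Disjoint on s)) (c : ι → ℝ) :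
    ∑ i, ‖c i‖ₑ * μ (s i) ≤
      eLpNorm (fun x => ∑ i, c i * (s i).indicator (fun _ => (1 : ℝ)) x) 1 (μ.restrict t) := by
  set f := fun x => ∑ i, c i * (s i).indicator (fun _ => (1 : ℝ)) x
  have hf : ∀ i, ∀ x ∈ s i, f x = c i := fun i x hx => by
    simp only [f]
    rw [Finset.sum_eq_single i (fun j _ hji => by
        rw [indicator_of_notMem (disjoint_left.1 (hdisj hji.symm) hx), mul_zero])
      (fun hi => absurd (Finset.mem_univ i) hi), indicator_of_mem hx, mul_one]
  calc ∑ i, ‖c i‖ₑ * μ (s i) = ∑ i, ∫⁻ x in s i, ‖f x‖ₑ ∂μ := by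
        refine Finset.sum_congr rfl fun i _ => ?_
        rw [setLIntegral_congr_fun (hs i) fun x hx => by rw [hf i x hx], setLIntegral_const]
    _ = ∫⁻ x in ⋃ i, s i, ‖f x‖ₑ ∂μ := by
        rw [lintegral_iUnion hs hdisj, tsum_fintype]
    _ ≤ ∫⁻ x in t, ‖f x‖ₑ ∂μ := lintegral_mono_set (iUnion_subset hst)
    _ = eLpNorm f 1 (μ.restrict t) := eLpNorm_one_eq_lintegral_enorm.symm

lemma eLpNorm_restrict_eq_ofReal_integral_rpow {α : Type*} [MeasurableSpace α] {μ : Measure α}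
    {s : Set α} {f : α → ℝ} {p : ℝ} (hs : MeasurableSet s) (hp : 0 < p)
    (hf : ∀ x ∈ s, 0 ≤ f x) (hint : IntegrableOn (fun x => f x ^ p) s μ) :
    eLpNorm f (ENNReal.ofReal p) (μ.restrict s) =
      ENNReal.ofReal ((∫ x in s, f x ^ p ∂μ) ^ (1 / p)) := by
  have hfp : ∀ x ∈ s, 0 ≤ f x ^ p := fun x hx => rpow_nonneg (hf x hx) p
  rw [eLpNorm_eq_lintegral_rpow_enorm_toReal (by simpa using hp) ofReal_ne_top,
    ENNReal.toReal_ofReal hp.le, one_div,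
    ← ENNReal.ofReal_rpow_of_nonneg (setIntegral_nonneg hs hfp) (by positivity),
    ofReal_integral_eq_lintegral_ofReal hint ((ae_restrict_iff' hs).2 (.of_forall hfp))]
  congr 1
  refine setLIntegral_congr_fun hs fun x hx => ?_
  rw [Real.enorm_eq_ofReal (hf x hx), ENNReal.ofReal_rpow_of_nonneg (hf x hx) hp.le]

lemma integral_Ioc_zero_rpow {r b : ℝ} (hr : -1 < r) (hb : 0 ≤ b) :
    ∫ x in Ioc 0 b, x ^ r = b ^ (r + 1) / (r + 1) := by
  rw [← intervalIntegral.integral_of_le hb, integral_rpow (.inl hr),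
    Real.zero_rpow (by linarith), sub_zero]

lemma eLpNorm_indicator_Ioc_rpow_neg {α p b : ℝ} (hb : 0 < b) (hp : 0 < p)
    (hαp : α * p < 1) :
    eLpNorm ((Ioc 0 b).indicator fun x => x ^ (-α)) (ENNReal.ofReal p) volume =
      ENNReal.ofReal ((b ^ (1 - α * p) / (1 - α * p)) ^ (1 / p)) := by
  have hpow : ∀ x ∈ Ioc (0 : ℝ) b, (x ^ (-α)) ^ p = x ^ (-(α * p)) := fun x hx => by
    rw [← Real.rpow_mul hx.1.le, neg_mul]
  have hint : IntegrableOn (fun x : ℝ => (x ^ (-α)) ^ p) (Ioc 0 b) :=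
    ((intervalIntegrable_iff_integrableOn_Ioc_of_le hb.le).mp
      (intervalIntegral.intervalIntegrable_rpow' (by linarith))).congr_fun
      (fun x hx => (hpow x hx).symm) measurableSet_Ioc
  rw [eLpNorm_indicator_eq_eLpNorm_restrict measurableSet_Ioc,
    eLpNorm_restrict_eq_ofReal_integral_rpow measurableSet_Ioc hp
      (fun x hx => Real.rpow_nonneg hx.1.le _) hint,
    setIntegral_congr_fun measurableSet_Ioc hpow, integral_Ioc_zero_rpow (by linarith) hb.le,
    show -(α * p) + 1 = 1 - α * p by ring]

lemma integral_Ioi_mul_rpow_neg_sub_one_rpow {α p b : ℝ} (hα : 0 ≤ α) (hb : 0 < b)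
    (hp : 1 < (α + 1) * p) :
    ∫ x in Ioi b, (α * b * x ^ (-α - 1)) ^ p = α ^ p * b ^ (1 - α * p) / ((α + 1) * p - 1) := by
  have hpow : ∀ x ∈ Ioi b, (α * b * x ^ (-α - 1)) ^ p = (α * b) ^ p * x ^ ((-α - 1) * p) :=
    fun x hx => by
      have hx0 : 0 < x := hb.trans hx
      rw [Real.mul_rpow (by positivity) (by positivity), ← Real.rpow_mul hx0.le]
  rw [setIntegral_congr_fun measurableSet_Ioi hpow, integral_const_mul,
    integral_Ioi_rpow_of_lt (by nlinarith) hb, Real.mul_rpow hα hb.le, neg_div, ← div_neg,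
    mul_assoc, ← mul_div_assoc, ← Real.rpow_add hb, ← mul_div_assoc,
    show p + ((-α - 1) * p + 1) = 1 - α * p by ring,
    show -((-α - 1) * p + 1) = (α + 1) * p - 1 by ring]

lemma eLpNorm_indicator_Ioi_mul_rpow_neg_sub_one_le {α p b : ℝ} (hα : 0 < α) (hα1 : α ≤ 1)
    (hb : 0 < b) (hp : 1 ≤ p) (hαp : α * p < 1) :
    eLpNorm ((Ioi b).indicator fun x => α * b * x ^ (-α - 1)) (ENNReal.ofReal p) volume ≤
      ENNReal.ofReal ((b ^ (1 - α * p) / (1 - α * p)) ^ (1 / p)) := by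
  have hp0 : 0 < p := by linarith
  have h1αp : 0 < 1 - α * p := by linarith
  have hD : 0 < (α + 1) * p - 1 := by nlinarith
  have hint : IntegrableOn (fun x => (α * b * x ^ (-α - 1)) ^ p) (Ioi b) := by
    refine IntegrableOn.congr_fun ((integrableOn_Ioi_rpow_of_lt (a := (-α - 1) * p)
      (by nlinarith) hb).const_mul ((α * b) ^ p)) (fun x hx => ?_) measurableSet_Ioi
    have hx0 : 0 < x := hb.trans hx
    rw [Real.mul_rpow (by positivity) (rpow_nonneg hx0.le _), ← Real.rpow_mul hx0.le]
  have hcoef : α ^ p * (1 - α * p) ≤ (α + 1) * p - 1 := by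
    have : α ^ p ≤ α := by simpa using Real.rpow_le_rpow_of_exponent_ge hα hα1 hp
    nlinarith
  rw [eLpNorm_indicator_eq_eLpNorm_restrict measurableSet_Ioi,
    eLpNorm_restrict_eq_ofReal_integral_rpow measurableSet_Ioi hp0
      (fun x hx => by have := hb.trans hx; positivity) hint,
    integral_Ioi_mul_rpow_neg_sub_one_rpow hα.le hb (by nlinarith)]
  refine ENNReal.ofReal_le_ofReal (Real.rpow_le_rpow (by positivity) ?_ (by positivity))
  rw [div_le_div_iff₀ hD h1αp]
  have := Real.rpow_nonneg hb.le (1 - α * p)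
  nlinarith

lemma div_rpow_one_div_eq {α p h : ℝ} (hh : 0 < h) (hp : 0 < p) (hαp : 0 < 1 - α * p) :
    (h ^ (1 - α * p) / (1 - α * p)) ^ (1 / p) =
      h ^ (-α - 1) * h ^ (1 / p) * h * (1 - α * p) ^ (-(1 / p)) := by
  rw [div_rpow (by positivity) hαp.le, ← rpow_mul hh.le, rpow_neg hαp.le, div_eq_mul_inv,
    ← rpow_add hh, ← rpow_add_one hh.ne']
  congr 2
  field_simp
  ring

lemma rpow_neg_sub_rpow_neg_add_le_s11 {α s b : ℝ} (hα : 0 ≤ α) (hs : 0 < s) (hb : 0 < b) :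
    s ^ (-α) - (s + b) ^ (-α) ≤ α * b * s ^ (-α - 1) := by
  obtain ⟨t, ⟨hst, -⟩, hslope⟩ := exists_hasDerivAt_eq_slope (fun x : ℝ => x ^ (-α))
    (fun x => -α * x ^ (-α - 1)) (lt_add_of_pos_right s hb)
    (fun x hx =>
      (continuousAt_rpow_const x (-α) (.inl (hs.trans_le hx.1).ne')).continuousWithinAt)
    (fun x hx => hasDerivAt_rpow_const (.inl (hs.trans hx.1).ne'))
  rw [add_sub_cancel_left, eq_div_iff hb.ne'] at hslope
  have hdecay : t ^ (-α - 1) ≤ s ^ (-α - 1) := rpow_le_rpow_of_nonpos hs hst.le (by linarith)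
  nlinarith [mul_le_mul_of_nonneg_left hdecay (mul_nonneg hα hb.le)]

/-- `Γ(1-α) D^α 1_{(0,h)}`. -/
noncomputable def fracDerivStep (α h x : ℝ) : ℝ :=
  (Ioi 0).indicator (fun y => y ^ (-α)) x - (Ioi h).indicator (fun y => (y - h) ^ (-α)) x

lemma measurable_fracDerivStep (α h : ℝ) : Measurable (fracDerivStep α h) :=
  (Measurable.indicator (by fun_prop) measurableSet_Ioi).sub
    (Measurable.indicator (by fun_prop) measurableSet_Ioi)

lemma fracDerivStep_eq {h : ℝ} (hh : 0 ≤ h) (α x : ℝ) :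
    fracDerivStep α h x = (Ioc 0 h).indicator (fun y => y ^ (-α)) x -
      (Ioi 0).indicator (fun y => y ^ (-α) - (y + h) ^ (-α)) (x - h) := by
  simp only [fracDerivStep, indicator_apply, mem_Ioi, mem_Ioc, sub_pos, sub_add_cancel]
  split_ifs <;> grind

lemma fracDerivStep_sub (α h a x : ℝ) :
    fracDerivStep α h (x - a) = (Ioi a).indicator (fun y => (y - a) ^ (-α)) x -
      (Ioi (a + h)).indicator (fun y => (y - (a + h)) ^ (-α)) x := by
  simp only [fracDerivStep, indicator_apply, mem_Ioi, sub_sub, lt_sub_iff_add_lt', add_zero]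

lemma abs_indicator_rpow_neg_sub_le {α h : ℝ} (hα : 0 ≤ α) (hh : 0 < h) (y : ℝ) :
    |(Ioi 0).indicator (fun y => y ^ (-α) - (y + h) ^ (-α)) y| ≤
      (Ioc 0 h).indicator (fun y => y ^ (-α)) y +
        (Ioi h).indicator (fun y => α * h * y ^ (-α - 1)) y := by
  rcases le_or_gt y 0 with hy0 | hy0
  · simp [indicator_of_notMem, not_lt.2 hy0, hy0.trans hh.le]
  have hmono : (y + h) ^ (-α) ≤ y ^ (-α) := rpow_le_rpow_of_nonpos hy0 (by linarith) (by linarith)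
  rw [indicator_of_mem (mem_Ioi.2 hy0), abs_of_nonneg (sub_nonneg.2 hmono)]
  rcases le_or_gt y h with hyh | hyh
  · rw [indicator_of_mem (show y ∈ Ioc 0 h from ⟨hy0, hyh⟩),
      indicator_of_notMem (show y ∉ Ioi h from not_lt.2 hyh), add_zero]
    linarith [rpow_nonneg (hy0.le.trans (le_add_of_nonneg_right hh.le)) (-α)]
  · rw [indicator_of_notMem (show y ∉ Ioc 0 h from fun hy => (not_le.2 hyh) hy.2),
      indicator_of_mem (show y ∈ Ioi h from hyh), zero_add]
    exact rpow_neg_sub_rpow_neg_add_le_s11 hα hy0 hh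

lemma eLpNorm_fracDerivStep_le {α h p : ℝ} (hα : 0 < α) (hα1 : α ≤ 1) (hh : 0 < h) (hp : 1 ≤ p)
    (hαp : α * p < 1) :
    eLpNorm (fracDerivStep α h) (ENNReal.ofReal p) volume ≤
      3 * ENNReal.ofReal ((h ^ (1 - α * p) / (1 - α * p)) ^ (1 / p)) := by
  set N := ENNReal.ofReal ((h ^ (1 - α * p) / (1 - α * p)) ^ (1 / p))
  set near := (Ioc 0 h).indicator fun y : ℝ => y ^ (-α)
  set tail := (Ioi h).indicator fun y : ℝ => α * h * y ^ (-α - 1)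
  set D := (Ioi 0).indicator fun y : ℝ => y ^ (-α) - (y + h) ^ (-α)
  have hP : (1 : ℝ≥0∞) ≤ ENNReal.ofReal p := ENNReal.one_le_ofReal.2 hp
  have hnear : eLpNorm near (ENNReal.ofReal p) volume = N :=
    eLpNorm_indicator_Ioc_rpow_neg hh (by linarith) hαp
  have hnear_meas : AEStronglyMeasurable near volume :=
    (Measurable.indicator (by fun_prop) measurableSet_Ioc).aestronglyMeasurable
  have hD : eLpNorm D (ENNReal.ofReal p) volume ≤ N + N := calc
    eLpNorm D (ENNReal.ofReal p) volume ≤ eLpNorm (near + tail) (ENNReal.ofReal p) volume :=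
        eLpNorm_mono_real fun y => abs_indicator_rpow_neg_sub_le hα.le hh y
    _ ≤ eLpNorm near (ENNReal.ofReal p) volume + eLpNorm tail (ENNReal.ofReal p) volume :=
        eLpNorm_add_le hnear_meas
          (Measurable.indicator (by fun_prop) measurableSet_Ioi).aestronglyMeasurable hP
    _ ≤ N + N := add_le_add hnear.le
        (eLpNorm_indicator_Ioi_mul_rpow_neg_sub_one_le hα hα1 hh hp hαp)
  calc eLpNorm (fracDerivStep α h) (ENNReal.ofReal p) volume
      = eLpNorm (near - fun x => D (x - h)) (ENNReal.ofReal p) volume := by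
        congr 1; ext x; exact fracDerivStep_eq hh.le α x
    _ ≤ eLpNorm near (ENNReal.ofReal p) volume +
          eLpNorm (fun x => D (x - h)) (ENNReal.ofReal p) volume :=
        eLpNorm_sub_le hnear_meas
          ((Measurable.indicator (by fun_prop) measurableSet_Ioi).comp
            (measurable_sub_const h)).aestronglyMeasurable hP
    _ = N + eLpNorm D (ENNReal.ofReal p) volume := by rw [hnear, eLpNorm_comp_sub_const]
    _ ≤ N + (N + N) := by gcongr
    _ = 3 * N := by ring

lemma eLpNorm_sum_smul_fracDerivStep_le {ι : Type*} {α h p : ℝ} (hα : 0 < α) (hα1 : α ≤ 1)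
    (hh : 0 < h) (hp : 1 ≤ p) (hαp : α * p < 1) (s : Finset ι) (c a : ι → ℝ) :
    eLpNorm (fun x => ∑ i ∈ s, c i • fracDerivStep α h (x - a i)) (ENNReal.ofReal p) volume ≤
      (∑ i ∈ s, ‖c i‖ₑ) * (3 * ENNReal.ofReal ((h ^ (1 - α * p) / (1 - α * p)) ^ (1 / p))) :=
  (eLpNorm_sum_smul_comp_sub_le s c a (measurable_fracDerivStep α h).aestronglyMeasurable
    (ENNReal.one_le_ofReal.2 hp)).trans (by gcongr; exact eLpNorm_fracDerivStep_le hα hα1 hh hp hαp)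

theorem stmt_11_general (α h : ℝ) (hα : α ∈ Set.Ioo (0 : ℝ) 1) (hh : 0 < h)
    (n : ℕ) (a c : Fin n → ℝ) (ha : ∀ k, 0 < a k)
    (hdisj : Pairwise fun i j =>
      Disjoint (Set.Ioo (a i) (a i + h)) (Set.Ioo (a j) (a j + h)))
    (ζ : ℝ → ℝ) (hζpos : ∀ p ∈ Set.Ioo (1 : ℝ) (1 / α), 0 < ζ p) :
    let f : ℝ → ℝ := fun x =>
      ∑ k, c k * Set.indicator (Set.Ioo (a k) (a k + h)) (fun _ => (1 : ℝ)) x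
    let Φ : ℝ → ℝ := fun x =>
      ∑ k, c k * (Set.indicator (Set.Ioi (a k)) (fun y => (y - a k) ^ (-α)) x -
        Set.indicator (Set.Ioi (a k + h)) (fun y => (y - (a k + h)) ^ (-α)) x)
    (⨆ p ∈ Set.Ioo (1 : ℝ) (1 / α),
        eLpNorm Φ (ENNReal.ofReal p) (volume.restrict (Set.Ioi (0 : ℝ))) /
          ENNReal.ofReal ((1 - α * p) ^ (-(1 / p)) * ζ p)) ≤
      ENNReal.ofReal (3 * h ^ (-α - 1)) *
        (⨆ p ∈ Set.Ioo (1 : ℝ) (1 / α), ENNReal.ofReal (h ^ (1 / p) / ζ p)) *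
          eLpNorm f 1 (volume.restrict (Set.Ioi (0 : ℝ))) := by
  intro f Φ
  have hΦ : Φ = fun x => ∑ k, c k • fracDerivStep α h (x - a k) := by
    ext x; simp only [Φ, smul_eq_mul, fracDerivStep_sub]
  have hf := sum_enorm_mul_measure_le_eLpNorm_one (μ := volume) (t := Ioi 0)
    (fun k => measurableSet_Ioo) (fun k x hx => (ha k).trans hx.1) hdisj c
  simp only [Real.volume_Ioo, add_sub_cancel_left] at hf
  refine iSup₂_le fun p hp => ?_
  have h1αp : 0 < 1 - α * p := by
    have := (lt_div_iff₀ hα.1).1 hp.2; linarith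
  have hζp := hζpos p hp
  have hconst : 3 * ENNReal.ofReal ((h ^ (1 - α * p) / (1 - α * p)) ^ (1 / p)) =
      ENNReal.ofReal (3 * h ^ (-α - 1)) * ENNReal.ofReal (h ^ (1 / p) / ζ p) *
        ENNReal.ofReal h * ENNReal.ofReal ((1 - α * p) ^ (-(1 / p)) * ζ p) := by
    rw [div_rpow_one_div_eq hh (by linarith [hp.1]) h1αp, ← ENNReal.ofReal_ofNat 3,
      ← ENNReal.ofReal_mul (by norm_num), ← ENNReal.ofReal_mul (by positivity),
      ← ENNReal.ofReal_mul (by positivity), ← ENNReal.ofReal_mul (by positivity)]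
    congr 1
    field_simp
  rw [ENNReal.div_le_iff (ENNReal.ofReal_pos.2 (mul_pos (rpow_pos_of_pos h1αp _) hζp)).ne'
    ofReal_ne_top]
  calc eLpNorm Φ (ENNReal.ofReal p) (volume.restrict (Ioi 0))
      ≤ eLpNorm Φ (ENNReal.ofReal p) volume := eLpNorm_mono_measure _ Measure.restrict_le_self
    _ ≤ (∑ k, ‖c k‖ₑ) * (3 * ENNReal.ofReal ((h ^ (1 - α * p) / (1 - α * p)) ^ (1 / p))) :=
        hΦ ▸ eLpNorm_sum_smul_fracDerivStep_le hα.1 hα.2.le hh hp.1.le (by linarith) _ c a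
    _ = ENNReal.ofReal (3 * h ^ (-α - 1)) * ENNReal.ofReal (h ^ (1 / p) / ζ p) *
          (∑ k, ‖c k‖ₑ * ENNReal.ofReal h) * ENNReal.ofReal ((1 - α * p) ^ (-(1 / p)) * ζ p) := by
        rw [hconst, ← Finset.sum_mul]
        ring
    _ ≤ _ := by
        gcongr
        exact le_iSup₂ (f := fun q (_ : q ∈ Ioo (1 : ℝ) (1 / α)) =>
          ENNReal.ofReal (h ^ (1 / q) / ζ q)) p hp

/-- Grand Lebesgue norm estimate for the fractional derivative of a very simple
(stepwise) function `f = Σ c_k 1_{(a_k, a_k+h)}` with pairwise disjoint intervals of common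
length `h`: with `θ(p) = (1-αp)^{-1/p} ζ(p)`,
`‖Γ(1-α) D^α f‖Gθ ≤ 3 h^{-α-1} φ(Gζ, h) ‖f‖_1`. -/
theorem stmt_11 (α h : ℝ) (hα : α ∈ Set.Ioo (0 : ℝ) 1) (hh : 0 < h)
    (n : ℕ) (hn : 1 ≤ n) (a c : Fin n → ℝ) (ha : ∀ k, 0 < a k)
    (hdisj : Pairwise fun i j =>
      Disjoint (Set.Ioo (a i) (a i + h)) (Set.Ioo (a j) (a j + h)))
    (ζ : ℝ → ℝ) (hζpos : ∀ p ∈ Set.Ioo (1 : ℝ) (1 / α), 0 < ζ p)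
    (hζ : ∃ ε : ℝ, 0 < ε ∧ ∀ p ∈ Set.Ioo (1 : ℝ) (1 / α), ε ≤ ζ p) :
    let f : ℝ → ℝ := fun x =>
      ∑ k, c k * Set.indicator (Set.Ioo (a k) (a k + h)) (fun _ => (1 : ℝ)) x
    let Φ : ℝ → ℝ := fun x =>
      ∑ k, c k * (Set.indicator (Set.Ioi (a k)) (fun y => (y - a k) ^ (-α)) x -
        Set.indicator (Set.Ioi (a k + h)) (fun y => (y - (a k + h)) ^ (-α)) x)
    (⨆ p ∈ Set.Ioo (1 : ℝ) (1 / α),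
        eLpNorm Φ (ENNReal.ofReal p) (volume.restrict (Set.Ioi (0 : ℝ))) /
          ENNReal.ofReal ((1 - α * p) ^ (-(1 / p)) * ζ p)) ≤
      ENNReal.ofReal (3 * h ^ (-α - 1)) *
        (⨆ p ∈ Set.Ioo (1 : ℝ) (1 / α), ENNReal.ofReal (h ^ (1 / p) / ζ p)) *
          eLpNorm f 1 (volume.restrict (Set.Ioi (0 : ℝ))) :=
  stmt_11_general α h hα hh n a c ha hdisj ζ hζpos
end

section
/- Let α ∈ (0,1), 1 ≤ p < ∞, 0 < b ≤ ∞, and let f : ℝ → ℝ be a measurable function vanishing outside (0, b). Define the Marchaud fractional derivative Γ(1−α) · D^α[f](x) = x^{−α} f(x) + α ∫_0^x (f(x) − f(t)) · (x − t)^{−1−α} dt for x ∈ (0, b). Then Γ(1−α) · ‖D^α[f]‖_{L^p(0,b)} ≤ ‖ x ↦ x^{−α} f(x) ‖_{L^p(0,b)} + α ∫_0^b t^{−1−α} · ω_p(f, t) dt, where ω_p(f, δ) = sup_{|h| ≤ δ} ‖ f(· + h) − f(·) ‖_{L^p(ℝ)} is the L^p modulus of continuity (with f extended by zero outside (0,b)).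 In particular, ‖D^α[f]‖_{L^p(0,b)} ≤ (1/Γ(1−α)) · ‖f‖_{B^{(α)}_p}. -/
open MeasureTheory Real Set ENNReal

/-- The Marchaud fractional derivative
`D^α[f](x) = (1/Γ(1-α)) [x^{-α} f(x) + α ∫_0^x (f(x)-f(t))(x-t)^{-1-α} dt]`. -/
noncomputable def marchaud (α : ℝ) (f : ℝ → ℝ) (x : ℝ) : ℝ :=
  (1 / Real.Gamma (1 - α)) *
    (x ^ (-α) * f x + α * ∫ t in (0 : ℝ)..x, (f x - f t) * (x - t) ^ (-1 - α))

/-- The `L^p` modulus of continuity `ω_p(f,δ) = sup_{|h| ≤ δ} ‖f(·+h) - f(·)‖_{L^p(ℝ)}`. -/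
noncomputable def modulusLp (p : ℝ≥0∞) (f : ℝ → ℝ) (δ : ℝ) : ℝ≥0∞ :=
  ⨆ h ∈ Set.Icc (-δ) δ, eLpNorm (fun x => f (x + h) - f x) p volume

/-- The interval `(0,b)` for `b : ℝ≥0∞` (allowing `b = ∞`), as a subset of `ℝ`. -/
def intervalOf (b : ℝ≥0∞) : Set ℝ := {x : ℝ | 0 < x ∧ ENNReal.ofReal x < b}

/-- The modified Besov norm
`‖f‖_{B^α_p} = ‖x^{-α} f(x)‖_{L^p(0,b)} + α ∫_0^b t^{-1-α} ω_p(f,t) dt`. -/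
noncomputable def besovNorm (α p : ℝ) (b : ℝ≥0∞) (f : ℝ → ℝ) : ℝ≥0∞ :=
  eLpNorm (fun x => x ^ (-α) * f x) (ENNReal.ofReal p) (volume.restrict (intervalOf b)) +
    ENNReal.ofReal α *
      ∫⁻ t in intervalOf b, ENNReal.ofReal (t ^ (-1 - α)) * modulusLp (ENNReal.ofReal p) f t

/-! Multiplied by `Γ(1-α)`, the Marchaud derivative is `x^{-α} f(x)` plus `α` times an integral
which, after the substitution `t = x - s`, is dominated by `∫_0^b s^{-1-α} |f(x) - f(x-s)| ds`.
Minkowski's integral inequality moves the `L^p` norm in `x` inside the `s`-integral, where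
`‖f - f(· - s)‖_p ≤ ω_p(f, s)`. Minkowski's inequality itself is the usual Hölder argument, run on
truncations which σ-finiteness makes `p`-integrable. -/

theorem ENNReal.rpow_one_div_le_of_le_rpow_mul {p q : ℝ} (hpq : p.HolderConjugate q)
    {a R : ℝ≥0∞} (ha : a ≠ ⊤) (h : a ≤ a ^ (1 / q) * R) : a ^ (1 / p) ≤ R := by
  rcases eq_or_ne a 0 with rfl | ha0
  · rw [ENNReal.zero_rpow_of_pos hpq.one_div_pos]
    exact zero_le
  have hsplit : a = a ^ (1 / q) * a ^ (1 / p) := by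
    rw [← ENNReal.rpow_add _ _ ha0 ha, one_div, one_div, add_comm, hpq.inv_add_inv_eq_one,
      ENNReal.rpow_one]
  exact (ENNReal.mul_le_mul_iff_right (ENNReal.rpow_pos (pos_iff_ne_zero.2 ha0) ha).ne'
    (ENNReal.rpow_ne_top_of_nonneg hpq.symm.one_div_nonneg ha)).1 (hsplit.symm.trans_le h)

theorem ENNReal.iSup_min_natCast_mul {c : ℝ≥0∞} (hc : c ≠ 0) (a : ℝ≥0∞) :
    ⨆ n : ℕ, min a (n * c) = a := by
  have := inf_iSup_eq a fun n : ℕ => (n : ℝ≥0∞) * c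
  rwa [← ENNReal.iSup_mul, ENNReal.iSup_natCast, ENNReal.top_mul hc, inf_top_eq, eq_comm] at this

theorem lintegral_le_of_forall_lintegral_ne_top {X : Type*} [MeasurableSpace X]
    {μ : Measure X} [SigmaFinite μ] {Φ : X → ℝ≥0∞} (hΦ : Measurable Φ) {c : ℝ≥0∞}
    (h : ∀ Ψ : X → ℝ≥0∞, Measurable Ψ → Ψ ≤ Φ → ∫⁻ x, Ψ x ∂μ ≠ ⊤ → ∫⁻ x, Ψ x ∂μ ≤ c) :
    ∫⁻ x, Φ x ∂μ ≤ c := by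
  obtain ⟨w, hw_pos, hw_meas, hw_int⟩ := exists_pos_lintegral_lt_of_sigmaFinite μ one_ne_zero
  set Ψ : ℕ → X → ℝ≥0∞ := fun n x => min (Φ x) (n * w x)
  have hΨ_meas (n : ℕ) : Measurable (Ψ n) :=
    hΦ.min (measurable_const.mul hw_meas.coe_nnreal_ennreal)
  have hΨ_mono : Monotone Ψ := fun m n hmn x =>
    min_le_min_left _ (by gcongr)
  have hΨ_fin (n : ℕ) : ∫⁻ x, Ψ n x ∂μ ≠ ⊤ := by
    refine ne_top_of_le_ne_top ?_ (lintegral_mono fun x => min_le_right _ _)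
    rw [lintegral_const_mul _ hw_meas.coe_nnreal_ennreal]
    exact ENNReal.mul_ne_top (ENNReal.natCast_ne_top n) hw_int.ne_top
  calc ∫⁻ x, Φ x ∂μ = ∫⁻ x, ⨆ n, Ψ n x ∂μ := by
        simp only [Ψ, ENNReal.iSup_min_natCast_mul (ENNReal.coe_ne_zero.2 (hw_pos _).ne')]
    _ = ⨆ n, ∫⁻ x, Ψ n x ∂μ := lintegral_iSup hΨ_meas hΨ_mono
    _ ≤ c := iSup_le fun n => h _ (hΨ_meas n) (fun x => min_le_left _ _) (hΨ_fin n)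

section Minkowski

variable {X Y : Type*} [MeasurableSpace X] [MeasurableSpace Y] {μ : Measure X} {ν : Measure Y}
  {F : X → Y → ℝ≥0∞}

/-- Hölder's inequality applied to `H ^ (p - 1) * F`; the finiteness of `∫ H ^ p` lets one divide
by `(∫ H ^ p) ^ (1 / q)`. -/
theorem lintegral_rpow_le_of_le_lintegral [SFinite μ] [SFinite ν]
    (hF : Measurable (Function.uncurry F)) {p q : ℝ} (hpq : p.HolderConjugate q)
    {H : X → ℝ≥0∞} (hH : Measurable H) (hHF : ∀ x, H x ≤ ∫⁻ y, F x y ∂ν)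
    (hH_fin : ∫⁻ x, H x ^ p ∂μ ≠ ⊤) :
    (∫⁻ x, H x ^ p ∂μ) ^ (1 / p) ≤ ∫⁻ y, (∫⁻ x, F x y ^ p ∂μ) ^ (1 / p) ∂ν := by
  refine ENNReal.rpow_one_div_le_of_le_rpow_mul hpq hH_fin ?_
  have hHp (x : X) : H x ^ p = H x ^ (p - 1) * H x := by
    conv_lhs => rw [← sub_add_cancel p 1]
    rw [ENNReal.rpow_add_of_nonneg _ _ hpq.sub_one_pos.le zero_le_one, ENNReal.rpow_one]
  have hHq : ∫⁻ x, (H x ^ (p - 1)) ^ q ∂μ = ∫⁻ x, H x ^ p ∂μ := by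
    simp only [← ENNReal.rpow_mul, hpq.sub_one_mul_conj]
  calc ∫⁻ x, H x ^ p ∂μ ≤ ∫⁻ x, ∫⁻ y, H x ^ (p - 1) * F x y ∂ν ∂μ := by
        refine lintegral_mono fun x => ?_
        rw [hHp, lintegral_const_mul _ hF.of_uncurry_left]
        gcongr
        exact hHF x
    _ = ∫⁻ y, ∫⁻ x, H x ^ (p - 1) * F x y ∂μ ∂ν :=
        lintegral_lintegral_swap (((hH.pow_const _).comp measurable_fst).mul hF).aemeasurable
    _ ≤ ∫⁻ y, (∫⁻ x, H x ^ p ∂μ) ^ (1 / q) * (∫⁻ x, F x y ^ p ∂μ) ^ (1 / p) ∂ν := by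
        refine lintegral_mono fun y => ?_
        have := ENNReal.lintegral_mul_le_Lp_mul_Lq μ hpq.symm (hH.pow_const (p - 1)).aemeasurable
          (hF.of_uncurry_right (y := y)).aemeasurable
        simpa only [Pi.mul_apply, hHq] using this
    _ = (∫⁻ x, H x ^ p ∂μ) ^ (1 / q) * ∫⁻ y, (∫⁻ x, F x y ^ p ∂μ) ^ (1 / p) ∂ν :=
        lintegral_const_mul' _ _ (ENNReal.rpow_ne_top_of_nonneg hpq.symm.one_div_nonneg hH_fin)

/-- **Minkowski's integral inequality**. -/
theorem ENNReal.lintegral_Lp_lintegral_le [SigmaFinite μ] [SFinite ν]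
    (hF : Measurable (Function.uncurry F)) {p : ℝ} (hp : 1 ≤ p) :
    (∫⁻ x, (∫⁻ y, F x y ∂ν) ^ p ∂μ) ^ (1 / p) ≤ ∫⁻ y, (∫⁻ x, F x y ^ p ∂μ) ^ (1 / p) ∂ν := by
  rcases hp.eq_or_lt with rfl | hp
  · simpa only [ENNReal.rpow_one, div_one] using (lintegral_lintegral_swap hF.aemeasurable).le
  have hp0 : 0 < p := zero_lt_one.trans hp
  have hpq := Real.HolderConjugate.conjExponent hp
  rw [one_div, ENNReal.rpow_inv_le_iff hp0]
  refine lintegral_le_of_forall_lintegral_ne_top (hF.lintegral_prod_right'.pow_const p)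
    fun Ψ hΨ hΨG hΨ_fin => ?_
  have hΨ_eq : ∀ x, (Ψ x ^ (1 / p)) ^ p = Ψ x := fun x => by
    rw [← ENNReal.rpow_mul, one_div_mul_cancel hp0.ne', ENNReal.rpow_one]
  have hH : ∀ x, Ψ x ^ (1 / p) ≤ ∫⁻ y, F x y ∂ν := fun x => by
    rw [one_div, ENNReal.rpow_inv_le_iff hp0]
    exact hΨG x
  have := lintegral_rpow_le_of_le_lintegral hF hpq (hΨ.pow_const (1 / p)) hH
    (by simpa only [hΨ_eq] using hΨ_fin)
  rwa [funext hΨ_eq, one_div, ENNReal.rpow_inv_le_iff hp0] at this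

theorem eLpNorm_lintegral_le_lintegral_eLpNorm [SigmaFinite μ] [SFinite ν]
    (hF : Measurable (Function.uncurry F)) {p : ℝ≥0∞} (hp : 1 ≤ p) (hp_top : p ≠ ⊤) :
    eLpNorm (fun x => ∫⁻ y, F x y ∂ν) p μ ≤ ∫⁻ y, eLpNorm (fun x => F x y) p μ ∂ν := by
  have hp0 : p ≠ 0 := (zero_lt_one.trans_le hp).ne'
  have hp_real : 1 ≤ p.toReal := by
    simpa only [ENNReal.toReal_one] using ENNReal.toReal_mono hp_top hp
  simpa only [eLpNorm_eq_lintegral_rpow_enorm_toReal hp0 hp_top, enorm_eq_self]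
    using ENNReal.lintegral_Lp_lintegral_le hF hp_real

end Minkowski

theorem eLpNorm_sub_comp_sub_le_modulusLp (p : ℝ≥0∞) (f : ℝ → ℝ) {s : ℝ} (hs : 0 ≤ s) :
    eLpNorm (fun x => f x - f (x - s)) p volume ≤ modulusLp p f s := by
  have h_neg : (fun x => f x - f (x - s)) = -fun x => f (x + -s) - f x := by
    funext x
    simp [sub_eq_add_neg]
  rw [h_neg, eLpNorm_neg]
  exact le_biSup (fun h => eLpNorm (fun x => f (x + h) - f x) p volume)
    ⟨le_rfl, by linarith⟩

theorem eLpNorm_lintegral_enorm_mul_sub_le {f w : ℝ → ℝ} (hf : Measurable f) (hw : Measurable w)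
    {μ ν : Measure ℝ} [SigmaFinite μ] [SFinite ν] (hμ : μ ≤ volume) (hν : ∀ᵐ s ∂ν, 0 ≤ s)
    {p : ℝ≥0∞} (hp : 1 ≤ p) (hp_top : p ≠ ⊤) :
    eLpNorm (fun x => ∫⁻ s, ‖w s * (f x - f (x - s))‖ₑ ∂ν) p μ ≤
      ∫⁻ s, ‖w s‖ₑ * modulusLp p f s ∂ν := by
  have hF : Measurable (Function.uncurry fun x s => ‖w s * (f x - f (x - s))‖ₑ) := by
    fun_prop
  calc _ ≤ ∫⁻ s, eLpNorm (fun x => ‖w s * (f x - f (x - s))‖ₑ) p μ ∂ν :=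
        eLpNorm_lintegral_le_lintegral_eLpNorm hF hp hp_top
    _ = ∫⁻ s, ‖w s‖ₑ * eLpNorm (fun x => f x - f (x - s)) p μ ∂ν := by
        refine lintegral_congr fun s => ?_
        rw [eLpNorm_enorm]
        exact eLpNorm_const_smul (w s) _ p μ
    _ ≤ ∫⁻ s, ‖w s‖ₑ * modulusLp p f s ∂ν := by
        refine lintegral_mono_ae (hν.mono fun s hs => ?_)
        gcongr
        exact (eLpNorm_mono_measure _ hμ).trans (eLpNorm_sub_comp_sub_le_modulusLp p f hs)

theorem enorm_intervalIntegral_sub_mul_rpow_le {f : ℝ → ℝ} {x : ℝ} (hx : 0 ≤ x) (β : ℝ) :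
    ‖∫ t in (0 : ℝ)..x, (f x - f t) * (x - t) ^ β‖ₑ ≤
      ∫⁻ s in Ioc 0 x, ‖s ^ β * (f x - f (x - s))‖ₑ := by
  have h := intervalIntegral.integral_comp_sub_left (fun s => s ^ β * (f x - f (x - s))) x
    (a := 0) (b := x)
  simp only [_root_.sub_sub_cancel, sub_self, sub_zero] at h
  rw [intervalIntegral.integral_congr fun t _ => mul_comm _ _, h,
    intervalIntegral.integral_of_le hx]
  exact enorm_integral_le_lintegral_enorm _

theorem ofReal_Gamma_mul_enorm_marchaud_le {α : ℝ} (hα0 : 0 ≤ α) (hα1 : α < 1) (f : ℝ → ℝ)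
    {x : ℝ} (hx : 0 ≤ x) :
    ENNReal.ofReal (Gamma (1 - α)) * ‖marchaud α f x‖ₑ ≤
      ‖x ^ (-α) * f x‖ₑ +
        ENNReal.ofReal α * ∫⁻ s in Ioc 0 x, ‖s ^ (-1 - α) * (f x - f (x - s))‖ₑ := by
  have hΓ : 0 < Gamma (1 - α) := Gamma_pos_of_pos (sub_pos.2 hα1)
  set I := ∫ t in (0 : ℝ)..x, (f x - f t) * (x - t) ^ (-1 - α)
  calc ENNReal.ofReal (Gamma (1 - α)) * ‖marchaud α f x‖ₑ = ‖x ^ (-α) * f x + α * I‖ₑ := by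
        rw [← Real.enorm_of_nonneg hΓ.le, ← enorm_mul, marchaud, ← mul_assoc,
          mul_one_div_cancel hΓ.ne', one_mul]
    _ ≤ ‖x ^ (-α) * f x‖ₑ + ENNReal.ofReal α * ‖I‖ₑ := by
        rw [← Real.enorm_of_nonneg hα0, ← enorm_mul]
        exact enorm_add_le _ _
    _ ≤ _ := by
        gcongr
        exact enorm_intervalIntegral_sub_mul_rpow_le hx _

theorem measurableSet_intervalOf (b : ℝ≥0∞) : MeasurableSet (intervalOf b) :=
  (measurableSet_lt measurable_const measurable_id).inter
    (measurableSet_lt ENNReal.measurable_ofReal measurable_const)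

theorem Ioc_subset_intervalOf {b : ℝ≥0∞} {x : ℝ} (hx : x ∈ intervalOf b) :
    Ioc 0 x ⊆ intervalOf b := fun _ hs =>
  ⟨hs.1, (ENNReal.ofReal_le_ofReal hs.2).trans_lt hx.2⟩

theorem ofReal_Gamma_mul_eLpNorm_marchaud_le_besovNorm {α p : ℝ} (hα : α ∈ Ioo (0 : ℝ) 1)
    (hp : 1 ≤ p) (b : ℝ≥0∞) {f : ℝ → ℝ} (hf : Measurable f) :
    ENNReal.ofReal (Gamma (1 - α)) *
        eLpNorm (marchaud α f) (ENNReal.ofReal p) (volume.restrict (intervalOf b)) ≤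
      besovNorm α p b f := by
  set S := intervalOf b
  set q := ENNReal.ofReal p
  have hS := measurableSet_intervalOf b
  have hq : 1 ≤ q := ENNReal.one_le_ofReal.2 hp
  have hΓ : 0 ≤ Gamma (1 - α) := (Gamma_pos_of_pos (sub_pos.2 hα.2)).le
  set g : ℝ → ℝ≥0∞ := fun x => ‖x ^ (-α) * f x‖ₑ
  set K : ℝ → ℝ≥0∞ := fun x => ∫⁻ s in S, ‖s ^ (-1 - α) * (f x - f (x - s))‖ₑ
  have hg : Measurable g := by fun_prop
  have hK : Measurable K := Measurable.lintegral_prod_right'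
    (f := fun z : ℝ × ℝ => ‖z.2 ^ (-1 - α) * (f z.1 - f (z.1 - z.2))‖ₑ) (by fun_prop)
  have h_pointwise (x : ℝ) (hx : x ∈ S) :
      ‖Gamma (1 - α) • marchaud α f x‖ₑ ≤ ‖(g + ENNReal.ofReal α • K) x‖ₑ := by
    rw [enorm_smul, Real.enorm_of_nonneg hΓ, enorm_eq_self]
    refine (ofReal_Gamma_mul_enorm_marchaud_le hα.1.le hα.2 f hx.1.le).trans ?_
    change _ ≤ g x + ENNReal.ofReal α * K x
    gcongr
    exact lintegral_mono_set (Ioc_subset_intervalOf hx)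
  have h_const_mul : eLpNorm (ENNReal.ofReal α • K) q (volume.restrict S) ≤
      ENNReal.ofReal α * eLpNorm K q (volume.restrict S) :=
    eLpNorm_le_nnreal_smul_eLpNorm_of_ae_le_mul' (c := α.toNNReal) (ae_of_all _ fun _ => le_rfl) _
  have h_weight : ∫⁻ s in S, ‖s ^ (-1 - α)‖ₑ * modulusLp q f s =
      ∫⁻ s in S, ENNReal.ofReal (s ^ (-1 - α)) * modulusLp q f s :=
    setLIntegral_congr_fun hS fun s hs => by rw [Real.enorm_of_nonneg (rpow_nonneg hs.1.le _)]
  calc ENNReal.ofReal (Gamma (1 - α)) * eLpNorm (marchaud α f) q (volume.restrict S)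
      = eLpNorm (Gamma (1 - α) • marchaud α f) q (volume.restrict S) := by
        rw [eLpNorm_const_smul, Real.enorm_of_nonneg hΓ]
    _ ≤ eLpNorm (g + ENNReal.ofReal α • K) q (volume.restrict S) :=
        eLpNorm_mono_enorm_ae ((ae_restrict_iff' hS).2 (ae_of_all _ h_pointwise))
    _ ≤ eLpNorm g q (volume.restrict S) + ENNReal.ofReal α * eLpNorm K q (volume.restrict S) :=
        (eLpNorm_add_le hg.aestronglyMeasurable (hK.const_smul _).aestronglyMeasurable hq).trans
          (by gcongr)
    _ ≤ besovNorm α p b f := by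
        rw [besovNorm, eLpNorm_enorm, ← h_weight]
        gcongr
        exact eLpNorm_lintegral_enorm_mul_sub_le hf (by fun_prop) Measure.restrict_le_self
          ((ae_restrict_iff' hS).2 (ae_of_all _ fun s hs => hs.1.le)) hq ENNReal.ofReal_ne_top

theorem stmt_12_general (α p : ℝ) (hα : α ∈ Set.Ioo (0 : ℝ) 1) (hp : 1 ≤ p)
    (b : ℝ≥0∞) (f : ℝ → ℝ) (hmeas : Measurable f) :
    ENNReal.ofReal (Real.Gamma (1 - α)) *
        eLpNorm (marchaud α f) (ENNReal.ofReal p) (volume.restrict (intervalOf b)) ≤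
      eLpNorm (fun x => x ^ (-α) * f x) (ENNReal.ofReal p) (volume.restrict (intervalOf b)) +
        ENNReal.ofReal α *
          ∫⁻ t in intervalOf b,
            ENNReal.ofReal (t ^ (-1 - α)) * modulusLp (ENNReal.ofReal p) f t ∧
    eLpNorm (marchaud α f) (ENNReal.ofReal p) (volume.restrict (intervalOf b)) ≤
      (ENNReal.ofReal (Real.Gamma (1 - α)))⁻¹ * besovNorm α p b f := by
  have h := ofReal_Gamma_mul_eLpNorm_marchaud_le_besovNorm hα hp b hmeas
  have hΓ : ENNReal.ofReal (Gamma (1 - α)) ≠ 0 :=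
    ENNReal.ofReal_ne_zero_iff.2 (Gamma_pos_of_pos (sub_pos.2 hα.2))
  exact ⟨h, (ENNReal.mul_le_iff_le_inv hΓ ENNReal.ofReal_ne_top).1 h⟩

/-- For `f` vanishing outside `(0,b)`:
`Γ(1-α) ‖D^α f‖_{L^p(0,b)} ≤ ‖x^{-α} f‖_{L^p(0,b)} + α ∫_0^b t^{-1-α} ω_p(f,t) dt`,
i.e. `‖D^α f‖_{L^p(0,b)} ≤ (1/Γ(1-α)) ‖f‖_{B^α_p}`. -/
theorem stmt_12 (α p : ℝ) (hα : α ∈ Set.Ioo (0 : ℝ) 1) (hp : 1 ≤ p)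
    (b : ℝ≥0∞) (hb : 0 < b) (f : ℝ → ℝ) (hmeas : Measurable f)
    (hf0 : ∀ x : ℝ, x ∉ intervalOf b → f x = 0) :
    ENNReal.ofReal (Real.Gamma (1 - α)) *
        eLpNorm (marchaud α f) (ENNReal.ofReal p) (volume.restrict (intervalOf b)) ≤
      eLpNorm (fun x => x ^ (-α) * f x) (ENNReal.ofReal p) (volume.restrict (intervalOf b)) +
        ENNReal.ofReal α *
          ∫⁻ t in intervalOf b,
            ENNReal.ofReal (t ^ (-1 - α)) * modulusLp (ENNReal.ofReal p) f t ∧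
    eLpNorm (marchaud α f) (ENNReal.ofReal p) (volume.restrict (intervalOf b)) ≤
      (ENNReal.ofReal (Real.Gamma (1 - α)))⁻¹ * besovNorm α p b f :=
  stmt_12_general α p hα hp b f hmeas
end
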